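/- arXiv:2407.01167 — 14 statements merged into one kernel-verified Lean document; each statement's English description precedes it below -/
import Mathlib

section
/- Let X be a random variable on a finite set 𝒳 with full-support pmf P_X, and let Y be a random variable with joint pmf P_{XY}. Fix y with P_Y(y) > 0. Then the supremum over all finite random variables U satisfying the Markov chain U−X−Y of log[ (1 − max_u P_U(u)) / (1 − max_u P_{U|Y=y}(u)) ] equals log max_{x∈𝒳} P_X(x)/P_{X|Y=y}(x). -/
open scoped ENNReal

lemma pmc_aux {X : Type} [Fintype X] [Nonempty X] (p q : X → ℝ≥0∞)
    (hp1 : ∑ x, p x = 1) (hq1 : ∑ x, q x = 1) (hp0 : ∀ x, p x ≠ 0) :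
    (⨆ (n : ℕ) (Q : X → Fin n → ℝ≥0∞) (_ : ∀ x, ∑ u, Q x u = 1),
        ENNReal.log
          ((1 - ⨆ u, ∑ x, Q x u * p x) / (1 - ⨆ u, ∑ x, Q x u * q x)))
      = ENNReal.log (⨆ x, p x / q x) := by
  classical
  have hple : ∀ x, p x ≤ 1 := fun x =>
    le_trans (Finset.single_le_sum (f := p) (fun i _ => zero_le) (Finset.mem_univ x)) hp1.le
  have hqle : ∀ x, q x ≤ 1 := fun x =>
    le_trans (Finset.single_le_sum (f := q) (fun i _ => zero_le) (Finset.mem_univ x)) hq1.le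
  obtain ⟨x₀, hx₀⟩ := Finite.exists_max fun x => p x / q x
  have hsup : (⨆ x, p x / q x) = p x₀ / q x₀ :=
    le_antisymm (iSup_le hx₀) (le_iSup (fun x => p x / q x) x₀)
  -- row sums: for a kernel with rows summing to 1 and a pmf r, total output mass is 1
  have hrow : ∀ (n : ℕ) (Q : X → Fin n → ℝ≥0∞), (∀ x, ∑ u, Q x u = 1) →
      ∀ (r : X → ℝ≥0∞), (∑ x, r x = 1) → ∑ u, ∑ x, Q x u * r x = 1 := by
    intro n Q hQ r hr
    rw [Finset.sum_comm]
    have : ∀ x, ∑ u, Q x u * r x = r x := by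
      intro x
      rw [← Finset.sum_mul, hQ x, one_mul]
    simp only [this, hr]
  apply le_antisymm
  · -- converse: every kernel gives ratio at most the sup
    refine iSup_le fun n => iSup_le fun Q => iSup_le fun hQ => ?_
    by_cases htop : (⨆ x, p x / q x) = ⊤
    · rw [htop, ENNReal.log_top]; exact le_top
    rw [ENNReal.log_le_log_iff]
    set lam := ⨆ x, p x / q x with hlam
    have hq0 : ∀ x, q x ≠ 0 := by
      intro x hx0
      apply htop
      have : p x / q x = ⊤ := by rw [hx0, ENNReal.div_zero (hp0 x)]
      exact top_le_iff.mp (this ▸ le_iSup (fun x => p x / q x) x)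
    have hkey : ∀ x, p x ≤ lam * q x := fun x =>
      (ENNReal.div_le_iff (hq0 x) (lt_of_le_of_lt (hqle x) ENNReal.one_lt_top).ne).mp
        (le_iSup (fun x => p x / q x) x)
    set A := fun u : Fin n => ∑ x, Q x u * p x with hA
    set B := fun u : Fin n => ∑ x, Q x u * q x with hB
    have hne : Nonempty (Fin n) := by
      rcases Nat.eq_zero_or_pos n with h0 | h0
      · exfalso
        have := hQ (Classical.arbitrary X)
        subst h0
        simp at this
      · exact ⟨⟨0, h0⟩⟩
    have hAsum : ∑ u, A u = 1 := hrow n Q hQ p hp1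
    have hBsum : ∑ u, B u = 1 := hrow n Q hQ q hq1
    have hA1 : ∀ u, A u ≤ 1 := fun u =>
      le_trans (Finset.single_le_sum (f := A) (fun i _ => zero_le) (Finset.mem_univ u)) hAsum.le
    have hB1 : ∀ u, B u ≤ 1 := fun u =>
      le_trans (Finset.single_le_sum (f := B) (fun i _ => zero_le) (Finset.mem_univ u)) hBsum.le
    obtain ⟨u₀, hu₀⟩ := Finite.exists_max B
    have hBsup : (⨆ u, B u) = B u₀ := le_antisymm (iSup_le hu₀) (le_iSup B u₀)
    have hAerase : 1 - A u₀ = ∑ u ∈ Finset.univ.erase u₀, A u := by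
      rw [← hAsum, ← Finset.add_sum_erase _ _ (Finset.mem_univ u₀)]
      exact ENNReal.add_sub_cancel_left (lt_of_le_of_lt (hA1 u₀) ENNReal.one_lt_top).ne
    have hBerase : 1 - B u₀ = ∑ u ∈ Finset.univ.erase u₀, B u := by
      rw [← hBsum, ← Finset.add_sum_erase _ _ (Finset.mem_univ u₀)]
      exact ENNReal.add_sub_cancel_left (lt_of_le_of_lt (hB1 u₀) ENNReal.one_lt_top).ne
    have hAB : ∀ u, A u ≤ lam * B u := by
      intro u
      calc A u ≤ ∑ x, Q x u * (lam * q x) :=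
            Finset.sum_le_sum fun x _ => mul_le_mul_right (hkey x) _
        _ = lam * B u := by
            rw [hB, Finset.mul_sum]
            exact Finset.sum_congr rfl fun x _ => by ring
    have hmain : 1 - ⨆ u, A u ≤ lam * (1 - ⨆ u, B u) := by
      rw [hBsup]
      calc 1 - ⨆ u, A u ≤ 1 - A u₀ := tsub_le_tsub_left (le_iSup A u₀) 1
        _ = ∑ u ∈ Finset.univ.erase u₀, A u := hAerase
        _ ≤ ∑ u ∈ Finset.univ.erase u₀, lam * B u :=
            Finset.sum_le_sum fun u _ => hAB u
        _ = lam * ∑ u ∈ Finset.univ.erase u₀, B u := by rw [Finset.mul_sum]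
        _ = lam * (1 - B u₀) := by rw [hBerase]
    by_cases hD : (1 - ⨆ u, B u) = 0
    · have hN : (1 - ⨆ u, A u) = 0 := by
        have := hmain
        rw [hD, mul_zero] at this
        exact le_antisymm this (zero_le)
      rw [hN, ENNReal.zero_div]
      exact zero_le
    · have hDt : (1 - ⨆ u, B u) ≠ ⊤ :=
        (lt_of_le_of_lt (tsub_le_self) ENNReal.one_lt_top).ne
      exact (ENNReal.div_le_iff hD hDt).mpr hmain
  · -- achievability: binary kernel splitting x₀
    set Q : X → Fin 2 → ℝ≥0∞ := fun x u => if x = x₀ then 2⁻¹ else (if u = 0 then 1 else 0)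
      with hQdef
    have h2ne : (2 : ℝ≥0∞)⁻¹ ≠ 0 := ENNReal.inv_ne_zero.mpr (by norm_num)
    have h2nt : (2 : ℝ≥0∞)⁻¹ ≠ ⊤ := ENNReal.inv_ne_top.mpr (by norm_num)
    have hhalf : (2 : ℝ≥0∞)⁻¹ + 2⁻¹ = 1 := ENNReal.inv_two_add_inv_two
    have hQ : ∀ x, ∑ u, Q x u = 1 := by
      intro x
      rw [Fin.sum_univ_two, hQdef]
      by_cases hx : x = x₀ <;> simp [hx, hhalf]
    set A := fun u : Fin 2 => ∑ x, Q x u * p x with hA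
    set B := fun u : Fin 2 => ∑ x, Q x u * q x with hB
    have hone : ∀ (r : X → ℝ≥0∞), (∑ x, r x = 1) →
        (∑ x, Q x 1 * r x) = 2⁻¹ * r x₀ ∧
        (∑ x, Q x 0 * r x) + 2⁻¹ * r x₀ = 1 := by
      intro r hr
      have h1 : (∑ x, Q x 1 * r x) = 2⁻¹ * r x₀ := by
        have hterm : ∀ x : X, Q x 1 * r x = if x = x₀ then 2⁻¹ * r x else 0 := by
          intro x
          by_cases hx : x = x₀ <;> simp [hQdef, hx]
        simp only [hterm]
        rw [Finset.sum_ite_eq' Finset.univ x₀ (fun x => 2⁻¹ * r x)]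
        simp
      refine ⟨h1, ?_⟩
      have := hrow 2 Q hQ r hr
      rw [Fin.sum_univ_two] at this
      rw [← h1]
      exact this
    obtain ⟨hA1, hA0⟩ := hone p hp1
    obtain ⟨hB1, hB0⟩ := hone q hq1
    have hA1' : A 1 = 2⁻¹ * p x₀ := hA1
    have hB1' : B 1 = 2⁻¹ * q x₀ := hB1
    have hA0' : A 0 + A 1 = 1 := by rw [hA1']; exact hA0
    have hB0' : B 0 + B 1 = 1 := by rw [hB1']; exact hB0
    have hrle : ∀ (r : X → ℝ≥0∞), r x₀ ≤ 1 → 2⁻¹ * r x₀ ≤ 1 - 2⁻¹ * r x₀ := by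
      intro r hr
      calc 2⁻¹ * r x₀ ≤ 2⁻¹ * 1 := mul_le_mul_right hr _
        _ = 1 - 2⁻¹ := by
            rw [mul_one]
            exact (ENNReal.sub_eq_of_eq_add h2nt (by rw [hhalf])).symm
        _ ≤ 1 - 2⁻¹ * r x₀ := tsub_le_tsub_left (by simpa using mul_le_mul_right hr 2⁻¹) 1
    have hAle : ∀ (r : X → ℝ≥0∞), (∑ x, r x = 1) → r x₀ ≤ 1 → (∑ x, Q x 1 * r x) ≤ (∑ x, Q x 0 * r x) := by
      intro r hr hr'
      obtain ⟨h1, h0⟩ := hone r hr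
      rw [h1]
      have h0' : (∑ x, Q x 0 * r x) = 1 - 2⁻¹ * r x₀ :=
        (ENNReal.sub_eq_of_eq_add
          (by
            have : 2⁻¹ * r x₀ ≤ 2⁻¹ * 1 := mul_le_mul_right hr' _
            exact (lt_of_le_of_lt this (by rw [mul_one]; exact ENNReal.inv_lt_top.mpr (by norm_num))).ne)
          h0.symm).symm
      rw [h0']
      exact hrle r hr'
    have hsupA : (⨆ u, A u) = A 0 := by
      refine le_antisymm (iSup_le fun u => ?_) (le_iSup A 0)
      fin_cases u
      · exact le_refl _
      · exact hAle p hp1 (hple x₀)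
    have hsupB : (⨆ u, B u) = B 0 := by
      refine le_antisymm (iSup_le fun u => ?_) (le_iSup B 0)
      fin_cases u
      · exact le_refl _
      · exact hAle q hq1 (hqle x₀)
    have hAeq : 1 - A 0 = A 1 := by
      refine ENNReal.sub_eq_of_eq_add ?_ ?_
      · exact (lt_of_le_of_lt (le_trans (le_add_right le_rfl) hA0'.le) ENNReal.one_lt_top).ne
      · rw [add_comm]; exact hA0'.symm
    have hBeq : 1 - B 0 = B 1 := by
      refine ENNReal.sub_eq_of_eq_add ?_ ?_
      · exact (lt_of_le_of_lt (le_trans (le_add_right le_rfl) hB0'.le) ENNReal.one_lt_top).ne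
      · rw [add_comm]; exact hB0'.symm
    have hratio : (1 - ⨆ u, A u) / (1 - ⨆ u, B u) = p x₀ / q x₀ := by
      rw [hsupA, hsupB, hAeq, hBeq, hA1', hB1']
      exact ENNReal.mul_div_mul_left _ _ h2ne h2nt
    calc ENNReal.log (⨆ x, p x / q x) = ENNReal.log ((1 - ⨆ u, A u) / (1 - ⨆ u, B u)) := by
          rw [hratio, hsup]
      _ ≤ ⨆ (Q' : X → Fin 2 → ℝ≥0∞) (_ : ∀ x, ∑ u, Q' x u = 1),
            ENNReal.log ((1 - ⨆ u, ∑ x, Q' x u * p x) / (1 - ⨆ u, ∑ x, Q' x u * q x)) := by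
          refine le_iSup_of_le Q (le_iSup_of_le hQ ?_)
          rw [hA, hB]
      _ ≤ _ := le_iSup_of_le 2 (le_refl _)

/-- Randomized function view of PMC (Theorem 1): the supremum over all finite
randomized functions `U` of `X` (modeled by kernels `Q : X → Fin n → ℝ≥0∞`,
Markov chain `U − X − Y`) of the log-ratio of prior to posterior error
probabilities equals `log max_x P_X(x)/P_{X|Y=y}(x)`. -/
theorem pmc_randomized_function_view
    {X Y : Type} [Fintype X] [Nonempty X] [Fintype Y]
    (pXY : X → Y → ℝ≥0∞) (hsum : ∑ x, ∑ y, pXY x y = 1)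
    (hfull : ∀ x, 0 < ∑ y', pXY x y')
    (y : Y) (hy : 0 < ∑ x, pXY x y) :
    (⨆ (n : ℕ) (Q : X → Fin n → ℝ≥0∞) (_ : ∀ x, ∑ u, Q x u = 1),
        ENNReal.log
          ((1 - ⨆ u, ∑ x, Q x u * (∑ y', pXY x y')) /
            (1 - ⨆ u, ∑ x, Q x u * (pXY x y / ∑ x', pXY x' y))))
      = ENNReal.log (⨆ x, (∑ y', pXY x y') / (pXY x y / ∑ x', pXY x' y)) := by
  have hpY : (∑ x, pXY x y) ≠ 0 := hy.ne'
  have hpYle : (∑ x, pXY x y) ≤ 1 := by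
    rw [← hsum]
    exact Finset.sum_le_sum fun x _ =>
      Finset.single_le_sum (f := fun y' => pXY x y') (fun i _ => zero_le) (Finset.mem_univ y)
  have hpYt : (∑ x, pXY x y) ≠ ⊤ := (lt_of_le_of_lt hpYle ENNReal.one_lt_top).ne
  exact pmc_aux (fun x => ∑ y', pXY x y') (fun x => pXY x y / ∑ x', pXY x' y)
    hsum
    (by
      show (∑ x, pXY x y / ∑ x', pXY x' y) = 1
      simp only [div_eq_mul_inv, ← Finset.sum_mul]
      exact ENNReal.mul_inv_cancel hpY hpYt)
    (fun x => (hfull x).ne')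
end

section
/- Let X, Y be finite random variables with joint pmf P_{XY}, and fix y with P_Y(y) > 0. For every finite random variable U with Markov chain U−X−Y there exists a finite set 𝒲 and a cost function c: 𝒳×𝒲 → ℝ₊ such that log[(1 − max_u P_U(u))/(1 − max_u P_{U|Y=y}(u))] = log[ (min_{w} Σ_x c(x,w) P_X(x)) / (min_w Σ_x c(x,w) P_{X|Y=y}(x)) ]. -/
open scoped ENNReal NNReal

lemma key_sum {X : Type} [Fintype X] (p : X → ℝ≥0∞) (hp : ∑ x, p x = 1)
    (q : X → ℝ≥0∞) (hq : ∀ x, q x ≤ 1) :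
    ∑ x, (1 - q x) * p x = 1 - ∑ x, q x * p x := by
  have hsum : ∑ x, (1 - q x) * p x + ∑ x, q x * p x = 1 := by
    have h1 : ∀ x ∈ Finset.univ, (1 - q x) * p x + q x * p x = p x := fun x _ => by
      rw [← add_mul, tsub_add_cancel_of_le (hq x), one_mul]
    rw [← Finset.sum_add_distrib, Finset.sum_congr rfl h1, hp]
  refine ENNReal.eq_sub_of_add_eq ?_ hsum
  intro h
  rw [h, add_top] at hsum
  exact absurd hsum (by simp)

/-- Theorem 2 (one direction): for every randomized function `U` of `X`
(kernel `Q : X → Fin n → ℝ≥0∞`, Markov chain `U − X − Y`), there is a finite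
set `𝒲 = Fin m` and a nonnegative cost function `c : X × 𝒲 → ℝ₊` whose
cost-function leakage equals the randomized-function leakage `Λ_U(X → y)`. -/
theorem randomized_function_leakage_eq_cost_leakage
    {X Y : Type} [Fintype X] [Nonempty X] [Fintype Y]
    (pXY : X → Y → ℝ≥0∞) (hsum : ∑ x, ∑ y, pXY x y = 1)
    (hfull : ∀ x, 0 < ∑ y', pXY x y')
    (y : Y) (hy : 0 < ∑ x, pXY x y)
    (n : ℕ) (Q : X → Fin n → ℝ≥0∞) (hQ : ∀ x, ∑ u, Q x u = 1) :
    ∃ (m : ℕ) (c : X → Fin m → ℝ≥0),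
      ENNReal.log
          ((1 - ⨆ u, ∑ x, Q x u * (∑ y', pXY x y')) /
            (1 - ⨆ u, ∑ x, Q x u * (pXY x y / ∑ x', pXY x' y)))
        = ENNReal.log
            ((⨅ w, ∑ x, (c x w : ℝ≥0∞) * (∑ y', pXY x y')) /
              (⨅ w, ∑ x, (c x w : ℝ≥0∞) * (pXY x y / ∑ x', pXY x' y))) := by
  -- n > 0
  obtain ⟨x0⟩ := ‹Nonempty X›
  have hn : 0 < n := by
    rcases Nat.eq_zero_or_pos n with h | h
    · exfalso; have := hQ x0; subst h; simp at this
    · exact h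
  haveI : Nonempty (Fin n) := Fin.pos_iff_nonempty.mp hn
  -- Q x u ≤ 1
  have hQle : ∀ x u, Q x u ≤ 1 := by
    intro x u
    rw [← hQ x]
    exact Finset.single_le_sum (f := fun u => Q x u) (fun _ _ => zero_le) (Finset.mem_univ u)
  have hQtop : ∀ x u, Q x u ≠ ⊤ := fun x u => ne_top_of_le_ne_top (by simp) (hQle x u)
  refine ⟨n, fun x u => (1 - Q x u).toNNReal, ?_⟩
  have hcoe : ∀ (x : X) (u : Fin n), ((1 - Q x u).toNNReal : ℝ≥0∞) = 1 - Q x u := by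
    intro x u
    exact ENNReal.coe_toNNReal (ne_top_of_le_ne_top (by simp) tsub_le_self)
  -- prior sums to 1
  have hp1 : ∑ x, (∑ y', pXY x y') = 1 := hsum
  -- posterior sums to 1
  have hytop : (∑ x, pXY x y) ≠ ⊤ := by
    intro h
    have hle : (∑ x, pXY x y) ≤ 1 := by
      rw [← hsum]
      exact Finset.sum_le_sum fun x _ =>
        Finset.single_le_sum (f := fun y' => pXY x y') (fun _ _ => zero_le) (Finset.mem_univ y)
    rw [h] at hle; simp at hle
  have hq1 : ∑ x, pXY x y / (∑ x', pXY x' y) = 1 := by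
    simp_rw [div_eq_mul_inv, ← Finset.sum_mul]
    exact ENNReal.mul_inv_cancel hy.ne' hytop
  have key : ∀ (p : X → ℝ≥0∞), ∑ x, p x = 1 →
      (⨅ w, ∑ x, ((1 - Q x w).toNNReal : ℝ≥0∞) * p x) = 1 - ⨆ u, ∑ x, Q x u * p x := by
    intro p hp
    have h1 : ∀ w : Fin n, ∑ x, ((1 - Q x w).toNNReal : ℝ≥0∞) * p x
        = 1 - ∑ x, Q x w * p x := by
      intro w
      simp_rw [hcoe]
      exact key_sum p hp (fun x => Q x w) (fun x => hQle x w)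
    simp_rw [h1]
    exact (ENNReal.sub_iSup (by simp)).symm
  rw [key _ hp1, key _ hq1]
end

section
/- Let X, Y be finite random variables with joint pmf P_{XY} and fix y with P_Y(y) > 0. The supremum over all finite sets 𝒲 and cost functions c: 𝒳×𝒲 → ℝ₊ of log[ (min_w Σ_x c(x,w) P_X(x)) / (min_w Σ_x c(x,w) P_{X|Y=y}(x)) ] equals log max_{x∈𝒳} P_X(x)/P_{X|Y=y}(x). -/
open scoped ENNReal NNReal

/-- Cost function view of PMC (Corollary 1 / Theorem 2): the supremum over all
finite guessing alphabets `𝒲 = Fin m` and nonnegative cost functions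
`c : 𝒳 × 𝒲 → ℝ₊` of the log-ratio of minimal prior expected cost to minimal
posterior expected cost equals `log max_x P_X(x)/P_{X|Y=y}(x)`. -/
theorem pmc_cost_function_view
    {X Y : Type} [Fintype X] [Nonempty X] [Fintype Y]
    (pXY : X → Y → ℝ≥0∞) (hsum : ∑ x, ∑ y, pXY x y = 1)
    (hfull : ∀ x, 0 < ∑ y', pXY x y')
    (y : Y) (hy : 0 < ∑ x, pXY x y) :
    (⨆ (m : ℕ) (c : X → Fin m → ℝ≥0),
        ENNReal.log
          ((⨅ w, ∑ x, (c x w : ℝ≥0∞) * (∑ y', pXY x y')) /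
            (⨅ w, ∑ x, (c x w : ℝ≥0∞) * (pXY x y / ∑ x', pXY x' y))))
      = ENNReal.log (⨆ x, (∑ y', pXY x y') / (pXY x y / ∑ x', pXY x' y)) := by
  classical
  set pX : X → ℝ≥0∞ := fun x => ∑ y', pXY x y' with hpX
  set q : X → ℝ≥0∞ := fun x => pXY x y / ∑ x', pXY x' y with hq
  set R : ℝ≥0∞ := ⨆ x, pX x / q x with hR
  -- basic facts
  have hqtop : ∀ x, q x ≠ ⊤ := by
    intro x
    have h1 : pXY x y ≠ ⊤ := by
      intro h
      have : (⊤ : ℝ≥0∞) ≤ ∑ x, ∑ y, pXY x y := by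
        refine le_trans ?_ (Finset.single_le_sum (fun i _ => zero_le) (Finset.mem_univ x))
        exact le_trans (h ▸ le_refl _) (Finset.single_le_sum (fun i _ => zero_le) (Finset.mem_univ y))
      rw [hsum] at this
      simp at this
    exact (ENNReal.div_lt_top h1 hy.ne').ne
  have hpXtop : ∀ x, pX x ≠ ⊤ := by
    intro x h
    have : (⊤ : ℝ≥0∞) ≤ ∑ x, ∑ y, pXY x y :=
      le_trans (h ▸ le_refl _) (Finset.single_le_sum (fun i _ => zero_le) (Finset.mem_univ x))
    rw [hsum] at this
    simp at this
  apply le_antisymm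
  · -- upper bound
    refine iSup_le fun m => iSup_le fun c => ?_
    by_cases hRtop : R = ⊤
    · rw [hRtop]; simp
    -- q x ≠ 0 for all x
    have hq0 : ∀ x, q x ≠ 0 := by
      intro x hx
      apply hRtop
      have : pX x / q x = ⊤ := by
        rw [hx, ENNReal.div_zero (hfull x).ne']
      exact top_le_iff.mp (this ▸ le_iSup (fun x => pX x / q x) x)
    -- pointwise bound pX x ≤ R * q x
    have hpoint : ∀ x, pX x ≤ R * q x := by
      intro x
      have : pX x = (pX x / q x) * q x := (ENNReal.div_mul_cancel (hq0 x) (hqtop x)).symm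
      rw [this]
      exact mul_le_mul_left (le_iSup (fun x => pX x / q x) x) _
    rcases Nat.eq_zero_or_pos m with hm | hm
    · subst hm
      simp only [iInf_of_empty]
      simp [ENNReal.div_top]
    haveI : Nonempty (Fin m) := Fin.pos_iff_nonempty.mp hm
    obtain ⟨w0, hw0⟩ := Finite.exists_min (fun w => ∑ x, (c x w : ℝ≥0∞) * q x)
    have hB : (⨅ w, ∑ x, (c x w : ℝ≥0∞) * q x) = ∑ x, (c x w0 : ℝ≥0∞) * q x :=
      le_antisymm (iInf_le _ _) (le_iInf hw0)
    have hBtop : (∑ x, (c x w0 : ℝ≥0∞) * q x) ≠ ⊤ := by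
      refine (ENNReal.sum_ne_top).mpr fun x _ => ?_
      exact ENNReal.mul_ne_top ENNReal.coe_ne_top (hqtop x)
    by_cases hB0 : (∑ x, (c x w0 : ℝ≥0∞) * q x) = 0
    · -- then all c x w0 = 0, numerator term is 0
      have hc0 : ∀ x, (c x w0 : ℝ≥0∞) = 0 := by
        intro x
        have := (Finset.sum_eq_zero_iff).mp hB0 x (Finset.mem_univ x)
        rcases mul_eq_zero.mp this with h | h
        · exact h
        · exact absurd h (hq0 x)
      have hA : (⨅ w, ∑ x, (c x w : ℝ≥0∞) * pX x) = 0 := by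
        refine le_antisymm (le_trans (iInf_le _ w0) ?_) (zero_le)
        simp [hc0]
      rw [hA, ENNReal.zero_div, ENNReal.log_zero]
      exact bot_le
    · have hA : (⨅ w, ∑ x, (c x w : ℝ≥0∞) * pX x) ≤ R * (∑ x, (c x w0 : ℝ≥0∞) * q x) := by
        refine le_trans (iInf_le _ w0) ?_
        rw [Finset.mul_sum]
        refine Finset.sum_le_sum fun x _ => ?_
        calc (c x w0 : ℝ≥0∞) * pX x ≤ (c x w0 : ℝ≥0∞) * (R * q x) :=
              mul_le_mul_right (hpoint x) _
          _ = R * ((c x w0 : ℝ≥0∞) * q x) := by ring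
      rw [ENNReal.log_le_log_iff, hB]
      rw [ENNReal.div_le_iff hB0 hBtop]
      exact hA
  · -- lower bound
    obtain ⟨x0, hx0⟩ := Finite.exists_max (fun x => pX x / q x)
    have hRx : R = pX x0 / q x0 := le_antisymm (iSup_le hx0) (le_iSup (fun x => pX x / q x) x0)
    rw [hRx]
    refine le_trans ?_ (le_iSup _ 1)
    refine le_trans ?_ (le_iSup (fun c : X → Fin 1 → ℝ≥0 =>
      ENNReal.log
          ((⨅ w, ∑ x, (c x w : ℝ≥0∞) * pX x) /
            (⨅ w, ∑ x, (c x w : ℝ≥0∞) * q x))) (fun x _ => if x = x0 then 1 else 0))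
    have hnum : (⨅ w : Fin 1, ∑ x, (((if x = x0 then (1:ℝ≥0) else 0) : ℝ≥0) : ℝ≥0∞) * pX x) = pX x0 := by
      rw [iInf_unique]
      simp [apply_ite, ite_mul, Finset.sum_ite_eq']
    have hden : (⨅ w : Fin 1, ∑ x, (((if x = x0 then (1:ℝ≥0) else 0) : ℝ≥0) : ℝ≥0∞) * q x) = q x0 := by
      rw [iInf_unique]
      simp [apply_ite, ite_mul, Finset.sum_ite_eq']
    rw [hnum, hden]
end

section
/- Let X, Y be finite random variables with joint pmf P_{XY}. The supremum over all finite random variables U with Markov chain U−X−Y, finite sets 𝒲, and cost functions c: 𝒰×𝒲 → ℝ₊ of log[ (min_w E[c(U,w)]) / (min_{ŵ: 𝒴→𝒲} E[c(U, ŵ(Y))]) ] equals the same supremum taken only over finite sets 𝒲 and cost functions c: 𝒳×𝒲 → ℝ₊, i.e., the supremum over randomized functions U of X is superfluous in the definition of maximal cost leakage. -/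
open scoped ENNReal NNReal

/-- Proposition 2: in the definition of maximal cost leakage, the supremum over
randomized functions `U` of `X` (Markov chain `U − X − Y`, modeled by kernels
`Q : X → Fin k → ℝ≥0∞`) is superfluous: the supremum over `U`, finite sets
`𝒲 = Fin n` and costs `c : 𝒰 × 𝒲 → ℝ₊` of
`log (min_w E[c(U,w)] / min_{ŵ : 𝒴 → 𝒲} E[c(U, ŵ(Y))])` equals the same
supremum taken only over `𝒲` and costs `c : 𝒳 × 𝒲 → ℝ₊`. -/
theorem maximal_cost_leakage_sup_over_U_superfluous
    {X Y : Type} [Fintype X] [Nonempty X] [Fintype Y]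
    (pXY : X → Y → ℝ≥0∞) (hsum : ∑ x, ∑ y, pXY x y = 1) :
    (⨆ (k : ℕ) (n : ℕ) (Q : X → Fin k → ℝ≥0∞) (_ : ∀ x, ∑ u, Q x u = 1)
        (c : Fin k → Fin n → ℝ≥0),
        ENNReal.log
          ((⨅ w, ∑ x, ∑ u, (∑ y', pXY x y') * Q x u * (c u w : ℝ≥0∞)) /
            (⨅ f : Y → Fin n, ∑ x, ∑ y, ∑ u, pXY x y * Q x u * (c u (f y) : ℝ≥0∞))))
      = ⨆ (n : ℕ) (c : X → Fin n → ℝ≥0),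
          ENNReal.log
            ((⨅ w, ∑ x, (∑ y', pXY x y') * (c x w : ℝ≥0∞)) /
              (⨅ f : Y → Fin n, ∑ x, ∑ y, pXY x y * (c x (f y) : ℝ≥0∞))) := by
  apply le_antisymm
  · -- reduce each (k, Q, c) term to a term with cost on X
    refine iSup_le fun k => iSup_le fun n => iSup_le fun Q => iSup_le fun hQ =>
      iSup_le fun c => ?_
    -- the reduced cost
    have hQfin : ∀ x u, Q x u ≠ ⊤ := by
      intro x u
      have : Q x u ≤ 1 := by
        rw [← hQ x]
        exact Finset.single_le_sum (fun i _ => zero_le) (Finset.mem_univ u)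
      exact ne_top_of_le_ne_top ENNReal.one_ne_top this
    set c₂ : X → Fin n → ℝ≥0 := fun x w => (∑ u, Q x u * (c u w : ℝ≥0∞)).toNNReal
      with hc₂
    have hkey : ∀ x w, (c₂ x w : ℝ≥0∞) = ∑ u, Q x u * (c u w : ℝ≥0∞) := by
      intro x w
      rw [hc₂]
      refine ENNReal.coe_toNNReal ?_
      refine (ENNReal.sum_lt_top.2 fun u _ => ?_).ne
      exact ENNReal.mul_lt_top (hQfin x u).lt_top ENNReal.coe_lt_top
    have hnum : ∀ w, (∑ x, ∑ u, (∑ y', pXY x y') * Q x u * (c u w : ℝ≥0∞))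
        = ∑ x, (∑ y', pXY x y') * (c₂ x w : ℝ≥0∞) := by
      intro w
      refine Finset.sum_congr rfl fun x _ => ?_
      rw [hkey, Finset.mul_sum]
      exact Finset.sum_congr rfl fun u _ => (mul_assoc _ _ _)
    have hden : ∀ f : Y → Fin n,
        (∑ x, ∑ y, ∑ u, pXY x y * Q x u * (c u (f y) : ℝ≥0∞))
        = ∑ x, ∑ y, pXY x y * (c₂ x (f y) : ℝ≥0∞) := by
      intro f
      refine Finset.sum_congr rfl fun x _ => Finset.sum_congr rfl fun y _ => ?_
      rw [hkey, Finset.mul_sum]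
      exact Finset.sum_congr rfl fun u _ => (mul_assoc _ _ _)
    calc ENNReal.log
          ((⨅ w, ∑ x, ∑ u, (∑ y', pXY x y') * Q x u * (c u w : ℝ≥0∞)) /
            (⨅ f : Y → Fin n, ∑ x, ∑ y, ∑ u, pXY x y * Q x u * (c u (f y) : ℝ≥0∞)))
        = ENNReal.log
          ((⨅ w, ∑ x, (∑ y', pXY x y') * (c₂ x w : ℝ≥0∞)) /
            (⨅ f : Y → Fin n, ∑ x, ∑ y, pXY x y * (c₂ x (f y) : ℝ≥0∞))) := by
          simp only [hnum]
          congr 2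
          exact iInf_congr hden
      _ ≤ _ := by
          exact le_iSup_of_le n (le_iSup_of_le c₂ le_rfl)
  · -- embed each (n, c) term as a (k = card X) term
    refine iSup_le fun n => iSup_le fun c => ?_
    set k := Fintype.card X with hk
    set e := Fintype.equivFin X with he
    set Q : X → Fin k → ℝ≥0∞ := fun x u => if u = e x then 1 else 0 with hQdef
    have hQ : ∀ x, ∑ u, Q x u = 1 := by
      intro x; simp [hQdef]
    set c₁ : Fin k → Fin n → ℝ≥0 := fun u w => c (e.symm u) w with hc₁
    have hsum1 : ∀ (x : X) (g : Fin k → ℝ≥0∞),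
        (∑ u, Q x u * g u) = g (e x) := by
      intro x g
      simp [hQdef, ite_mul, Finset.sum_ite_eq']
    have hnum : ∀ w, (∑ x, ∑ u, (∑ y', pXY x y') * Q x u * (c₁ u w : ℝ≥0∞))
        = ∑ x, (∑ y', pXY x y') * (c x w : ℝ≥0∞) := by
      intro w
      refine Finset.sum_congr rfl fun x _ => ?_
      have : (∑ u, (∑ y', pXY x y') * Q x u * (c₁ u w : ℝ≥0∞))
          = ∑ u, Q x u * ((∑ y', pXY x y') * (c₁ u w : ℝ≥0∞)) := by
        refine Finset.sum_congr rfl fun u _ => ?_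
        ring
      rw [this, hsum1, hc₁]
      simp
    have hden : ∀ f : Y → Fin n,
        (∑ x, ∑ y, ∑ u, pXY x y * Q x u * (c₁ u (f y) : ℝ≥0∞))
        = ∑ x, ∑ y, pXY x y * (c x (f y) : ℝ≥0∞) := by
      intro f
      refine Finset.sum_congr rfl fun x _ => Finset.sum_congr rfl fun y _ => ?_
      have : (∑ u, pXY x y * Q x u * (c₁ u (f y) : ℝ≥0∞))
          = ∑ u, Q x u * (pXY x y * (c₁ u (f y) : ℝ≥0∞)) := by
        refine Finset.sum_congr rfl fun u _ => ?_
        ring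
      rw [this, hsum1, hc₁]
      simp
    refine le_iSup_of_le k (le_iSup_of_le n (le_iSup_of_le Q (le_iSup_of_le hQ
      (le_iSup_of_le c₁ ?_))))
    refine le_of_eq ?_
    simp only [hnum]
    congr 2
    exact (iInf_congr hden).symm
end

section
/- Let (X₁,…,X_k) and (Y₁,…,Y_k) be finite random variables such that P_{X₁,…,X_k} = Π_i P_{X_i} and P_{Y₁,…,Y_k | X₁,…,X_k} = Π_i P_{Y_i|X_i}. Then for every (y₁,…,y_k) with positive probability, Λ(X₁,…,X_k → y₁,…,y_k) = Σ_{i=1}^k Λ(X_i → y_i). -/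
open scoped ENNReal

private lemma log_prod' {ι : Type} (s : Finset ι) (f : ι → ℝ≥0∞) :
    ENNReal.log (∏ i ∈ s, f i) = ∑ i ∈ s, ENNReal.log (f i) := by
  classical
  induction s using Finset.induction with
  | empty => simp
  | insert _ _ h ih =>
    rw [Finset.prod_insert h, Finset.sum_insert h, ENNReal.log_mul_add, ih]

private lemma iSupProdAux {ι : Type} [Fintype ι] {X : ι → Type}
    [∀ i, Fintype (X i)] [∀ i, Nonempty (X i)] (g : ∀ i, X i → ℝ≥0∞) :
    (⨆ xv : ∀ i, X i, ∏ i, g i (xv i)) = ∏ i, ⨆ x, g i x := by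
  apply le_antisymm
  · exact iSup_le fun xv => Finset.prod_le_prod' fun i _ => le_iSup (g i) (xv i)
  · choose xv hxv using fun i => exists_eq_ciSup_of_finite (f := g i)
    calc ∏ i, ⨆ x, g i x = ∏ i, g i (xv i) := by simp [hxv]
      _ ≤ _ := le_iSup (fun xv : ∀ i, X i => ∏ i, g i (xv i)) xv

private lemma key_ratio {a b S : ℝ≥0∞} (ha0 : a ≠ 0) (haT : a ≠ ⊤)
    (hS0 : S ≠ 0) (hST : S ≠ ⊤) : a / (a * b / S) = S / b := by
  rw [mul_div_assoc]
  calc a / (a * (b / S)) = a * 1 / (a * (b / S)) := by rw [mul_one]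
    _ = 1 / (b / S) := ENNReal.mul_div_mul_left _ _ ha0 haT
    _ = S / b := by rw [one_div, ENNReal.inv_div (Or.inl hST) (Or.inl hS0)]

/-- Additivity of PMC: if `(X₁,…,X_k)` are independent and the channel factors
as `P_{Y₁,…,Y_k | X₁,…,X_k} = ∏ᵢ P_{Yᵢ|Xᵢ}`, then for every outcome
`(y₁,…,y_k)` of positive probability,
`Λ(X₁,…,X_k → y₁,…,y_k) = ∑ᵢ Λ(Xᵢ → yᵢ)`, where
`Λ(X→y) = log max_x P_X(x)/P_{X|Y=y}(x)`. -/
theorem pmc_additivity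
    {ι : Type} [Fintype ι] [DecidableEq ι] {X Y : ι → Type}
    [∀ i, Fintype (X i)] [∀ i, Nonempty (X i)] [∀ i, Fintype (Y i)]
    (pX : ∀ i, X i → ℝ≥0∞) (K : ∀ i, X i → Y i → ℝ≥0∞)
    (hpX : ∀ i, ∑ x, pX i x = 1) (hfull : ∀ i x, 0 < pX i x)
    (hK : ∀ i x, ∑ y, K i x y = 1)
    (y : ∀ i, Y i) (hy : 0 < ∏ i, ∑ x, pX i x * K i x (y i)) :
    ENNReal.log (⨆ xv : ∀ i, X i,
        (∏ i, pX i (xv i)) /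
          ((∏ i, pX i (xv i) * K i (xv i) (y i)) / (∏ i, ∑ x, pX i x * K i x (y i))))
      = ∑ i, ENNReal.log
          (⨆ x, pX i x / (pX i x * K i x (y i) / (∑ x', pX i x' * K i x' (y i)))) := by
  classical
  set S : ι → ℝ≥0∞ := fun i => ∑ x, pX i x * K i x (y i) with hS
  have hpXT : ∀ i x, pX i x ≠ ⊤ := by
    intro i x
    exact ne_top_of_le_ne_top (by simp) ((Finset.single_le_sum (f := pX i)
      (fun x _ => zero_le) (Finset.mem_univ x)).trans_eq (hpX i))
  have hKT : ∀ i x, K i x (y i) ≠ ⊤ := by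
    intro i x
    exact ne_top_of_le_ne_top (by simp) ((Finset.single_le_sum (f := K i x)
      (fun y _ => zero_le) (Finset.mem_univ (y i))).trans_eq (hK i x))
  have hS0 : ∀ i, S i ≠ 0 := fun i h =>
    hy.ne' (Finset.prod_eq_zero (Finset.mem_univ i) h)
  have hST : ∀ i, S i ≠ ⊤ := by
    intro i
    have h1 : S i ≤ 1 := by
      rw [hS, ← hpX i]
      refine Finset.sum_le_sum fun x _ => ?_
      calc pX i x * K i x (y i) ≤ pX i x * 1 :=
            mul_le_mul_right ((Finset.single_le_sum (f := K i x) (fun y _ => zero_le)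
              (Finset.mem_univ (y i))).trans_eq (hK i x)) _
        _ = pX i x := mul_one _
    exact ne_top_of_le_ne_top (by simp) h1
  have hterm : ∀ i x, pX i x / (pX i x * K i x (y i) / S i) = S i / K i x (y i) :=
    fun i x => key_ratio (hfull i x).ne' (hpXT i x) (hS0 i) (hST i)
  have hglob : ∀ xv : ∀ i, X i,
      (∏ i, pX i (xv i)) / ((∏ i, pX i (xv i) * K i (xv i) (y i)) / ∏ i, S i)
        = ∏ i, S i / K i (xv i) (y i) := by
    intro xv
    have hA0 : (∏ i, pX i (xv i)) ≠ 0 :=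
      Finset.prod_ne_zero_iff.2 fun i _ => (hfull i (xv i)).ne'
    have hAT : (∏ i, pX i (xv i)) ≠ ⊤ :=
      (ENNReal.prod_lt_top fun i _ => (hpXT i (xv i)).lt_top).ne
    have hSp0 : (∏ i, S i) ≠ 0 := Finset.prod_ne_zero_iff.2 fun i _ => hS0 i
    have hSpT : (∏ i, S i) ≠ ⊤ := (ENNReal.prod_lt_top fun i _ => (hST i).lt_top).ne
    rw [Finset.prod_mul_distrib, key_ratio hA0 hAT hSp0 hSpT, div_eq_mul_inv,
      ENNReal.prod_inv_distrib (fun i _ j _ _ => Or.inr (hKT j (xv j))),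
      ← Finset.prod_mul_distrib]
    simp [div_eq_mul_inv]
  calc ENNReal.log (⨆ xv : ∀ i, X i,
        (∏ i, pX i (xv i)) / ((∏ i, pX i (xv i) * K i (xv i) (y i)) / ∏ i, S i))
      = ENNReal.log (⨆ xv : ∀ i, X i, ∏ i, S i / K i (xv i) (y i)) := by
        rw [iSup_congr hglob]
    _ = ENNReal.log (∏ i, ⨆ x, S i / K i x (y i)) :=
        congrArg ENNReal.log (iSupProdAux (fun i x => S i / K i x (y i)))
    _ = ∑ i, ENNReal.log (⨆ x, S i / K i x (y i)) := log_prod' _ _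
    _ = _ := by
        refine Finset.sum_congr rfl fun i _ => ?_
        rw [iSup_congr (hterm i)]
end

section
/- Post-processing inequality for PMC: Let X, Y, Z be finite random variables forming a Markov chain X−Y−Z. Then max_{z: P_Z(z)>0} Λ(X→z) ≤ max_{y: P_Y(y)>0} Λ(X→y). -/
open scoped ENNReal

/-- Post-processing inequality for PMC: for a Markov chain `X − Y − Z` (with `Z`
generated from `Y` by the kernel `L`),
`max_{z : P_Z(z)>0} Λ(X → z) ≤ max_{y : P_Y(y)>0} Λ(X → y)`, where
`Λ(X→y) = log max_x P_X(x)/P_{X|Y=y}(x)`. -/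
theorem pmc_post_processing
    {X Y Z : Type} [Fintype X] [Nonempty X] [Fintype Y] [Fintype Z]
    (pXY : X → Y → ℝ≥0∞) (hsum : ∑ x, ∑ y, pXY x y = 1)
    (hfull : ∀ x, 0 < ∑ y', pXY x y')
    (L : Y → Z → ℝ≥0∞) (hL : ∀ y, ∑ z, L y z = 1) :
    (⨆ z, ⨆ (_ : 0 < ∑ x, ∑ y, pXY x y * L y z),
        ENNReal.log (⨆ x, (∑ y', pXY x y') /
          ((∑ y, pXY x y * L y z) / (∑ x', ∑ y, pXY x' y * L y z))))
      ≤ ⨆ y, ⨆ (_ : 0 < ∑ x, pXY x y),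
          ENNReal.log (⨆ x, (∑ y', pXY x y') / (pXY x y / ∑ x', pXY x' y)) := by
  classical
  -- basic bounds
  have hXYle1 : ∀ x y, pXY x y ≤ 1 := by
    intro x y
    calc pXY x y ≤ ∑ y', pXY x y' := Finset.single_le_sum (fun _ _ => zero_le) (Finset.mem_univ y)
    _ ≤ ∑ x', ∑ y', pXY x' y' := Finset.single_le_sum (f := fun x' => ∑ y', pXY x' y')
      (fun _ _ => zero_le) (Finset.mem_univ x)
    _ = 1 := hsum
  have hpXle1 : ∀ x, ∑ y', pXY x y' ≤ 1 := by
    intro x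
    have h1 : ∑ y', pXY x y' ≤ ∑ x', ∑ y', pXY x' y' :=
      Finset.single_le_sum (f := fun x' => ∑ y', pXY x' y')
        (fun _ _ => zero_le) (Finset.mem_univ x)
    exact hsum ▸ h1
  have hpYle1 : ∀ y, ∑ x', pXY x' y ≤ 1 := by
    intro y
    calc ∑ x', pXY x' y ≤ ∑ x', ∑ y', pXY x' y' :=
      Finset.sum_le_sum fun x' _ =>
        Finset.single_le_sum (fun _ _ => zero_le) (Finset.mem_univ y)
    _ = 1 := hsum
  have hLle1 : ∀ y z, L y z ≤ 1 := by
    intro y z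
    calc L y z ≤ ∑ z', L y z' := Finset.single_le_sum (fun _ _ => zero_le) (Finset.mem_univ z)
    _ = 1 := hL y
  have hXYlepY : ∀ x y, pXY x y ≤ ∑ x', pXY x' y := fun x y =>
    Finset.single_le_sum (f := fun x' => pXY x' y) (fun _ _ => zero_le) (Finset.mem_univ x)
  -- pZ z rewritten as ∑ y pY y * L y z
  have hpZ : ∀ z, ∑ x', ∑ y, pXY x' y * L y z = ∑ y, (∑ x', pXY x' y) * L y z := by
    intro z
    rw [Finset.sum_comm]
    exact Finset.sum_congr rfl fun y _ => (Finset.sum_mul ..).symm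
  have hpZle1 : ∀ z, ∑ x', ∑ y, pXY x' y * L y z ≤ 1 := by
    intro z
    calc ∑ x', ∑ y, pXY x' y * L y z
        ≤ ∑ x', ∑ y, pXY x' y * 1 :=
          Finset.sum_le_sum fun x' _ => Finset.sum_le_sum fun y _ =>
            mul_le_mul_right (hLle1 y z) _
    _ = 1 := by simpa using hsum
  -- eligible y exists
  have hYne : ∃ y, 0 < ∑ x', pXY x' y := by
    by_contra h
    push_neg at h
    have h0 : ∑ y, ∑ x', pXY x' y = 0 :=
      Finset.sum_eq_zero fun y _ => le_antisymm (h y) (zero_le)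
    rw [Finset.sum_comm] at h0
    rw [h0] at hsum
    exact zero_ne_one hsum
  obtain ⟨y1, hy1⟩ := hYne
  obtain ⟨y0, hy0mem, hy0max⟩ := Finset.exists_max_image
    (Finset.univ.filter fun y => 0 < ∑ x', pXY x' y)
    (fun y => ⨆ x, (∑ y', pXY x y') / (pXY x y / ∑ x', pXY x' y))
    ⟨y1, by simp [hy1]⟩
  have hy0pos : 0 < ∑ x', pXY x' y0 := by simpa using hy0mem
  set S := ⨆ x, (∑ y', pXY x y') / (pXY x y0 / ∑ x', pXY x' y0) with hSdef
  refine iSup₂_le fun z hz => ?_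
  have hmain : (⨆ x, (∑ y', pXY x y') /
      ((∑ y, pXY x y * L y z) / (∑ x', ∑ y, pXY x' y * L y z))) ≤ S := by
    rcases eq_or_ne S ⊤ with hT | hT
    · simp [hT]
    refine iSup_le fun x => ?_
    -- key pointwise inequality for every y
    have hkey : ∀ y, (∑ y', pXY x y') * (∑ x', pXY x' y) ≤ S * pXY x y := by
      intro y
      rcases eq_or_lt_of_le ((show (0:ℝ≥0∞) ≤ ∑ x', pXY x' y from zero_le)) with hy | hy
      · have : pXY x y = 0 := le_antisymm (hy ▸ hXYlepY x y) (zero_le)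
        simp [← hy]
      · have hyS : (∑ y', pXY x y') / (pXY x y / ∑ x', pXY x' y) ≤ S := by
          refine le_trans (le_iSup (f := fun x => (∑ y', pXY x y') / (pXY x y / ∑ x', pXY x' y)) x)
            (hy0max y (by simp [hy]))
        have hpYne0 : (∑ x', pXY x' y) ≠ 0 := hy.ne'
        have hpYneT : (∑ x', pXY x' y) ≠ ⊤ := (lt_of_le_of_lt (hpYle1 y) (by simp)).ne
        have hxy0 : pXY x y ≠ 0 := by
          intro h0
          rw [h0] at hyS
          simp only [ENNReal.zero_div, ENNReal.div_zero (hfull x).ne'] at hyS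
          exact hT (top_le_iff.mp hyS)
        have hb0 : pXY x y / (∑ x', pXY x' y) ≠ 0 :=
          ENNReal.div_ne_zero.mpr ⟨hxy0, hpYneT⟩
        have hbT : pXY x y / (∑ x', pXY x' y) ≠ ⊤ :=
          (ENNReal.div_lt_top (lt_of_le_of_lt (hXYle1 x y) (by simp)).ne hpYne0).ne
        have := (ENNReal.div_le_iff hb0 hbT).mp hyS
        calc (∑ y', pXY x y') * (∑ x', pXY x' y)
            ≤ S * (pXY x y / ∑ x', pXY x' y) * (∑ x', pXY x' y) :=
              mul_le_mul_left this _
        _ = S * pXY x y := by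
              rw [mul_assoc, ENNReal.div_mul_cancel hpYne0 hpYneT]
    -- sum against L y z
    have hsumineq : (∑ y', pXY x y') * (∑ x', ∑ y, pXY x' y * L y z)
        ≤ S * (∑ y, pXY x y * L y z) := by
      rw [hpZ z, Finset.mul_sum, Finset.mul_sum]
      refine Finset.sum_le_sum fun y _ => ?_
      calc (∑ y', pXY x y') * ((∑ x', pXY x' y) * L y z)
          = ((∑ y', pXY x y') * (∑ x', pXY x' y)) * L y z := by ring
      _ ≤ (S * pXY x y) * L y z := mul_le_mul_left (hkey y) _
      _ = S * (pXY x y * L y z) := by ring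
    have hpZne0 : (∑ x', ∑ y, pXY x' y * L y z) ≠ 0 := hz.ne'
    have hpZneT : (∑ x', ∑ y, pXY x' y * L y z) ≠ ⊤ :=
      (lt_of_le_of_lt (hpZle1 z) (by simp)).ne
    have hXZne0 : (∑ y, pXY x y * L y z) ≠ 0 := by
      intro h0
      rw [h0, mul_zero] at hsumineq
      have hpos : 0 < (∑ y', pXY x y') * (∑ x', ∑ y, pXY x' y * L y z) :=
        ENNReal.mul_pos (hfull x).ne' hpZne0
      exact hpos.ne' (le_antisymm hsumineq (zero_le))
    have hXZneT : (∑ y, pXY x y * L y z) ≠ ⊤ := by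
      refine (lt_of_le_of_lt (le_trans ?_ (hpZle1 z)) (by simp)).ne
      exact Finset.single_le_sum (f := fun x' => ∑ y, pXY x' y * L y z)
        (fun _ _ => zero_le) (Finset.mem_univ x)
    have hb0 : (∑ y, pXY x y * L y z) / (∑ x', ∑ y, pXY x' y * L y z) ≠ 0 :=
      ENNReal.div_ne_zero.mpr ⟨hXZne0, hpZneT⟩
    have hbT : (∑ y, pXY x y * L y z) / (∑ x', ∑ y, pXY x' y * L y z) ≠ ⊤ :=
      (ENNReal.div_lt_top hXZneT hpZne0).ne
    rw [ENNReal.div_le_iff hb0 hbT, ← mul_div_assoc,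
      ENNReal.le_div_iff_mul_le (Or.inl hpZne0) (Or.inl hpZneT)]
    exact hsumineq
  refine le_trans (ENNReal.log_monotone hmain) ?_
  exact le_iSup₂ (f := fun y (_ : 0 < ∑ x, pXY x y) =>
    ENNReal.log (⨆ x, (∑ y', pXY x y') / (pXY x y / ∑ x', pXY x' y))) y0 hy0pos
end

section
/- Composition bound for PMC: Let X, Y₁, Y₂ be finite random variables with joint pmf P_{X Y₁ Y₂}. For all (y₁,y₂) with P_{Y₁Y₂}(y₁,y₂) > 0, Λ(X → (y₁,y₂)) ≤ Λ(X → y₁) + Λ(X → y₂ | y₁), where Λ(X → y₂ | y₁) := log max_x P_{X|Y₁=y₁}(x)/P_{X|Y₁=y₁,Y₂=y₂}(x). -/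
open scoped ENNReal

/-- Composition bound for PMC: for finite `X, Y₁, Y₂` with joint pmf
`P_{X Y₁ Y₂}` and every `(y₁,y₂)` with `P_{Y₁Y₂}(y₁,y₂) > 0`,
`Λ(X → (y₁,y₂)) ≤ Λ(X → y₁) + Λ(X → y₂ | y₁)`, where
`Λ(X → (y₁,y₂)) = log max_x P_X(x)/P_{X|Y₁=y₁,Y₂=y₂}(x)`,
`Λ(X → y₁) = log max_x P_X(x)/P_{X|Y₁=y₁}(x)` and
`Λ(X → y₂ | y₁) = log max_x P_{X|Y₁=y₁}(x)/P_{X|Y₁=y₁,Y₂=y₂}(x)`. -/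
theorem pmc_composition
    {X Y1 Y2 : Type} [Fintype X] [Nonempty X] [Fintype Y1] [Fintype Y2]
    (p : X → Y1 → Y2 → ℝ≥0∞) (hsum : ∑ x, ∑ y1, ∑ y2, p x y1 y2 = 1)
    (hfull : ∀ x, 0 < ∑ y1', ∑ y2', p x y1' y2')
    (y1 : Y1) (y2 : Y2) (h12 : 0 < ∑ x, p x y1 y2) :
    ENNReal.log (⨆ x, (∑ y1', ∑ y2', p x y1' y2') / (p x y1 y2 / ∑ x', p x' y1 y2))
      ≤ ENNReal.log (⨆ x, (∑ y1', ∑ y2', p x y1' y2') /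
            ((∑ y2', p x y1 y2') / (∑ x', ∑ y2', p x' y1 y2')))
        + ENNReal.log (⨆ x, ((∑ y2', p x y1 y2') / (∑ x', ∑ y2', p x' y1 y2')) /
            (p x y1 y2 / ∑ x', p x' y1 y2)) := by
  classical
  set A : X → ℝ≥0∞ := fun x => ∑ y1', ∑ y2', p x y1' y2' with hA
  set s2 : ℝ≥0∞ := ∑ x', p x' y1 y2 with hs2
  set t : ℝ≥0∞ := ∑ x', ∑ y2', p x' y1 y2' with ht
  set B : X → ℝ≥0∞ := fun x => (∑ y2', p x y1 y2') / t with hB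
  set C : X → ℝ≥0∞ := fun x => p x y1 y2 / s2 with hC
  -- every partial sum is ≤ 1 hence ≠ ⊤
  have hAle : ∀ x, A x ≤ 1 := by
    intro x
    rw [← hsum]
    exact Finset.single_le_sum (f := fun x => A x) (fun i _ => zero_le)
      (Finset.mem_univ x)
  have htle : t ≤ 1 := by
    rw [← hsum]
    refine Finset.sum_le_sum fun x _ => ?_
    exact Finset.single_le_sum (f := fun y1' => ∑ y2', p x y1' y2') (fun i _ => zero_le)
      (Finset.mem_univ y1)
  have ht_ne_top : t ≠ ⊤ := (lt_of_le_of_lt htle (by norm_num)).ne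
  have hs2le : s2 ≤ t := by
    refine Finset.sum_le_sum fun x _ => ?_
    exact Finset.single_le_sum (f := fun y2' => p x y1 y2') (fun i _ => zero_le)
      (Finset.mem_univ y2)
  have hs2_ne : s2 ≠ 0 := h12.ne'
  have ht_ne : t ≠ 0 := fun h => hs2_ne (le_antisymm (h ▸ hs2le) (zero_le))
  have hp_ne_top : ∀ x, p x y1 y2 ≠ ⊤ := by
    intro x
    have h1 : p x y1 y2 ≤ A x := by
      calc p x y1 y2 ≤ ∑ y2', p x y1 y2' :=
            Finset.single_le_sum (f := fun y2' => p x y1 y2') (fun i _ => zero_le)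
              (Finset.mem_univ y2)
        _ ≤ A x := Finset.single_le_sum (f := fun y1' => ∑ y2', p x y1' y2')
              (fun i _ => zero_le) (Finset.mem_univ y1)
    exact (lt_of_le_of_lt (h1.trans (hAle x)) (by norm_num)).ne
  have hC_ne_top : ∀ x, C x ≠ ⊤ := fun x =>
    (ENNReal.div_lt_top (hp_ne_top x) hs2_ne).ne
  have hB_ne_top : ∀ x, B x ≠ ⊤ := by
    intro x
    refine (ENNReal.div_lt_top ?_ ht_ne).ne
    have : (∑ y2', p x y1 y2') ≤ t :=
      Finset.single_le_sum (f := fun x' => ∑ y2', p x' y1 y2') (fun i _ => zero_le)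
        (Finset.mem_univ x)
    exact (lt_of_le_of_lt (this.trans htle) (by norm_num)).ne
  -- there is x0 with B x0 ≠ 0
  obtain ⟨x0, hx0⟩ : ∃ x0, (∑ y2', p x0 y1 y2') ≠ 0 := by
    by_contra h
    push_neg at h
    exact ht_ne (Finset.sum_eq_zero fun x _ => h x)
  have hBx0 : B x0 ≠ 0 := by
    simp only [hB, ne_eq, ENNReal.div_eq_zero_iff, not_or]
    exact ⟨hx0, ht_ne_top⟩
  have hBC_pos : (⨆ x, B x / C x) ≠ 0 := by
    intro h
    have hle : B x0 / C x0 ≤ 0 := h ▸ le_iSup (fun x => B x / C x) x0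
    have : B x0 / C x0 ≠ 0 := by
      simp only [ne_eq, ENNReal.div_eq_zero_iff, not_or]
      exact ⟨hBx0, hC_ne_top x0⟩
    exact this (le_antisymm hle (zero_le))
  by_cases hAB : (⨆ x, A x / B x) = ⊤
  · rw [hAB, ENNReal.log_top, EReal.top_add_of_ne_bot]
    · exact le_top
    · rw [ne_eq, ENNReal.log_eq_bot_iff]
      exact hBC_pos
  · -- in this case B x ≠ 0 for all x
    have hBne : ∀ x, B x ≠ 0 := by
      intro x hx
      apply hAB
      refine top_le_iff.mp ?_
      have : A x / B x = ⊤ := by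
        rw [hx, ENNReal.div_zero (hfull x).ne']
      exact this ▸ le_iSup (fun x => A x / B x) x
    have key : ∀ x, A x / C x = (A x / B x) * (B x / C x) := by
      intro x
      rw [div_eq_mul_inv, div_eq_mul_inv, div_eq_mul_inv]
      rw [mul_assoc, ← mul_assoc (B x)⁻¹, ENNReal.inv_mul_cancel (hBne x) (hB_ne_top x), one_mul]
    have hsup : (⨆ x, A x / C x) ≤ (⨆ x, A x / B x) * (⨆ x, B x / C x) := by
      refine iSup_le fun x => ?_
      rw [key x]
      exact mul_le_mul' (le_iSup (fun x => A x / B x) x) (le_iSup (fun x => B x / C x) x)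
    calc ENNReal.log (⨆ x, A x / C x)
        ≤ ENNReal.log ((⨆ x, A x / B x) * (⨆ x, B x / C x)) :=
          ENNReal.log_monotone hsup
      _ = _ := ENNReal.log_mul_add
end

section
/- Generalized randomized response PMC: let 𝒳 = 𝒴 = {1,…,n}, let P_X be a full-support pmf, and let P_{Y|X=i}(j) = e^{ε_r}/(n−1+e^{ε_r}) if i=j and 1/(n−1+e^{ε_r}) otherwise, for ε_r ≥ 0. Then for every j, Λ(X→j) = log(1 + P_X(j)(e^{ε_r} − 1)), and hence max_j Λ(X→j) = log(1 + (max_j P_X(j))(e^{ε_r} − 1)) ≤ ε_r. -/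
open scoped BigOperators

/-- PMC of the generalized randomized response mechanism on `𝒳 = 𝒴 = {1,…,n}`
(`n ≥ 2`) with parameter `ε_r ≥ 0`: for every `j`,
`Λ(X→j) = log(1 + P_X(j)(e^{ε_r} − 1))`, hence
`max_j Λ(X→j) = log(1 + (max_j P_X(j))(e^{ε_r} − 1)) ≤ ε_r`, where
`Λ(X→j) = log max_i P_Y(j)/P_{Y|X=i}(j)`. -/
theorem randomized_response_pmc
    {n : ℕ} (hn : 1 < n) (pX : Fin n → ℝ)
    (hsum : ∑ i, pX i = 1) (hfull : ∀ i, 0 < pX i)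
    (εr : ℝ) (hεr : 0 ≤ εr) :
    let K : Fin n → Fin n → ℝ := fun i j =>
      if i = j then Real.exp εr / ((n : ℝ) - 1 + Real.exp εr)
      else 1 / ((n : ℝ) - 1 + Real.exp εr)
    let pY : Fin n → ℝ := fun j => ∑ i, K i j * pX i
    let Λ : Fin n → ℝ := fun j => Real.log (⨆ i, pY j / K i j)
    (∀ j, Λ j = Real.log (1 + pX j * (Real.exp εr - 1)))
    ∧ (⨆ j, Λ j) = Real.log (1 + (⨆ j, pX j) * (Real.exp εr - 1))
    ∧ (⨆ j, Λ j) ≤ εr := by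
  intro K pY Λ
  set e := Real.exp εr with he
  have he1 : 1 ≤ e := Real.one_le_exp hεr
  have hn2 : (2:ℝ) ≤ (n:ℝ) := by exact_mod_cast hn
  have hD : (0:ℝ) < (n:ℝ) - 1 + e := by nlinarith
  set D : ℝ := (n:ℝ) - 1 + e with hDdef
  -- pY formula
  have hpY : ∀ j, pY j = (1 + pX j * (e - 1)) / D := by
    intro j
    have hterm : ∀ i, K i j * pX i
        = (1/D) * pX i + (if i = j then ((e-1)/D) * pX i else 0) := by
      intro i
      simp only [K]
      split <;> simp only [← he, ← hDdef] <;> field_simp <;> ring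
    simp only [pY]
    rw [Finset.sum_congr rfl (fun i _ => hterm i), Finset.sum_add_distrib,
      ← Finset.mul_sum, hsum, Finset.sum_ite_eq' Finset.univ j]
    simp only [Finset.mem_univ, if_true]
    field_simp
  have hcpos : ∀ j, 0 < 1 + pX j * (e - 1) := by
    intro j; nlinarith [hfull j]
  -- the inner sup
  have hsupI : ∀ j, (⨆ i, pY j / K i j) = 1 + pX j * (e - 1) := by
    intro j
    haveI : Nontrivial (Fin n) := Fin.nontrivial_iff_two_le.mpr hn
    obtain ⟨i0, hi0⟩ := exists_ne j
    have hval : ∀ i, pY j / K i j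
        = if i = j then (1 + pX j * (e-1)) / e else 1 + pX j * (e-1) := by
      intro i
      rw [hpY j]
      simp only [K]
      have hDne : ((n:ℝ) - 1 + Real.exp εr) ≠ 0 := by
        simpa [hDdef, he] using hD.ne'
      split <;> field_simp <;> simp only [← he, ← hDdef] <;> ring
    apply le_antisymm
    · apply ciSup_le
      intro i
      rw [hval i]
      split
      · rw [div_le_iff₀ (by positivity)]
        nlinarith [hcpos j]
      · exact le_rfl
    · have := le_ciSup (Set.Finite.bddAbove (Set.finite_range fun i => pY j / K i j)) i0
      rwa [hval i0, if_neg hi0] at this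
  have hΛ : ∀ j, Λ j = Real.log (1 + pX j * (e - 1)) := by
    intro j; simp only [Λ, hsupI j]
  haveI : Nonempty (Fin n) := ⟨⟨0, Nat.lt_of_lt_of_le Nat.zero_lt_one hn.le⟩⟩
  refine ⟨hΛ, ?_, ?_⟩
  · -- choose maximizer
    obtain ⟨j0, -, hj0⟩ := Finset.exists_max_image Finset.univ pX ⟨⟨0, Nat.lt_of_lt_of_le Nat.zero_lt_one hn.le⟩, Finset.mem_univ _⟩
    have hj0' : ∀ j, pX j ≤ pX j0 := fun j => hj0 j (Finset.mem_univ j)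
    have hsupX : (⨆ j, pX j) = pX j0 :=
      le_antisymm (ciSup_le hj0')
        (le_ciSup (Set.Finite.bddAbove (Set.finite_range pX)) j0)
    have hsupΛ : (⨆ j, Λ j) = Λ j0 := by
      apply le_antisymm
      · apply ciSup_le
        intro j
        rw [hΛ j, hΛ j0]
        apply Real.log_le_log (hcpos j)
        nlinarith [hj0' j]
      · exact le_ciSup (Set.Finite.bddAbove (Set.finite_range Λ)) j0
    rw [hsupΛ, hΛ j0, hsupX]
  · obtain ⟨j0, -, hj0⟩ := Finset.exists_max_image Finset.univ pX ⟨⟨0, Nat.lt_of_lt_of_le Nat.zero_lt_one hn.le⟩, Finset.mem_univ _⟩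
    have hj0' : ∀ j, pX j ≤ pX j0 := fun j => hj0 j (Finset.mem_univ j)
    have hsupΛ : (⨆ j, Λ j) ≤ Λ j0 := by
      apply ciSup_le
      intro j
      rw [hΛ j, hΛ j0]
      apply Real.log_le_log (hcpos j)
      nlinarith [hj0' j]
    have hle1 : pX j0 ≤ 1 := by
      have := Finset.single_le_sum (f := pX) (fun i _ => (hfull i).le) (Finset.mem_univ j0)
      rwa [hsum] at this
    have : Λ j0 ≤ εr := by
      rw [hΛ j0, ← Real.log_exp εr, ← he]
      apply Real.log_le_log (hcpos j0)
      nlinarith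
    exact hsupΛ.trans this
end

section
/- PML-extremal mechanism PMC: let 𝒳 = 𝒴 = {1,…,n}, P_X a full-support pmf with p_min = min_j P_X(j), and 0 ≤ ε_u < log(1/(1−p_min)). Define P_{Y|X=i}(j) = 1 − e^{ε_u}(1 − P_X(j)) if i=j and e^{ε_u}P_X(j) if i≠j. Then P_{Y|X} is a valid channel, P_Y(j) = P_X(j) for all j, Λ(X→j) = log[ P_X(j) / (1 − e^{ε_u}(1 − P_X(j))) ], and max_j Λ(X→j) = log[ p_min / (1 − e^{ε_u}(1 − p_min)) ]. -/
open scoped BigOperators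

/-- PMC of the PML-extremal mechanism in the high-privacy regime: for
`𝒳 = 𝒴 = {1,…,n}`, full-support prior `pX` with `p_min = min_j pX j`, and
`0 ≤ ε_u < log(1/(1 − p_min))`, the mechanism
`P_{Y|X=i}(j) = 1 − e^{ε_u}(1 − pX j)` if `i = j`, `e^{ε_u} pX j` otherwise,
is a valid channel, satisfies `P_Y(j) = pX j`,
`Λ(X→j) = log[pX j / (1 − e^{ε_u}(1 − pX j))]`, and
`max_j Λ(X→j) = log[p_min / (1 − e^{ε_u}(1 − p_min))]`. -/
theorem extremal_mechanism_pmc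
    {n : ℕ} (hn : 0 < n) (pX : Fin n → ℝ)
    (hsum : ∑ i, pX i = 1) (hfull : ∀ i, 0 < pX i)
    (εu : ℝ) (hεu0 : 0 ≤ εu)
    (hεu : εu < Real.log (1 / (1 - ⨅ j, pX j))) :
    let pmin : ℝ := ⨅ j, pX j
    let K : Fin n → Fin n → ℝ := fun i j =>
      if i = j then 1 - Real.exp εu * (1 - pX j) else Real.exp εu * pX j
    let pY : Fin n → ℝ := fun j => ∑ i, K i j * pX i
    let Λ : Fin n → ℝ := fun j => Real.log (⨆ i, pY j / K i j)
    (∀ i j, 0 ≤ K i j ∧ K i j ≤ 1) ∧ (∀ i, ∑ j, K i j = 1)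
    ∧ (∀ j, pY j = pX j)
    ∧ (∀ j, Λ j = Real.log (pX j / (1 - Real.exp εu * (1 - pX j))))
    ∧ (⨆ j, Λ j) = Real.log (pmin / (1 - Real.exp εu * (1 - pmin))) := by
  intro pmin K pY Λ
  have hne : Nonempty (Fin n) := ⟨⟨0, hn⟩⟩
  obtain ⟨j0, hj0⟩ := Finite.exists_min pX
  have hbdd : BddBelow (Set.range pX) := (Set.finite_range pX).bddBelow
  have hpmin : pmin = pX j0 := le_antisymm (ciInf_le hbdd j0) (le_ciInf hj0)
  have hpmin_le : ∀ j, pmin ≤ pX j := fun j => hpmin ▸ hj0 j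
  have hpmin_pos : 0 < pmin := hpmin ▸ hfull j0
  have hle1 : ∀ j, pX j ≤ 1 := by
    intro j
    calc pX j ≤ ∑ i, pX i := Finset.single_le_sum (fun i _ => (hfull i).le) (Finset.mem_univ j)
    _ = 1 := hsum
  have hnmul : (n : ℝ) * pmin ≤ 1 := by
    calc (n : ℝ) * pmin = ∑ _i : Fin n, pmin := by
          simp [Finset.sum_const, Finset.card_univ, mul_comm]
      _ ≤ ∑ i, pX i := Finset.sum_le_sum (fun i _ => hpmin_le i)
      _ = 1 := hsum
  have hp1 : pmin < 1 := by
    by_contra h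
    push_neg at h
    have h1 : pmin = 1 := by
      have : pmin ≤ (n : ℝ) * pmin := by
        have : (1 : ℝ) ≤ (n : ℝ) := by exact_mod_cast hn
        nlinarith
      linarith
    rw [show (1 : ℝ) - pmin = 0 by rw [h1]; ring] at hεu
    simp at hεu
    linarith
  have h1p : 0 < 1 - pmin := by linarith
  have hE1 : 1 ≤ Real.exp εu := Real.one_le_exp hεu0
  have hElt : Real.exp εu < 1 / (1 - pmin) := by
    have := Real.exp_lt_exp.mpr hεu
    rwa [Real.exp_log (by positivity)] at this
  have hEm : Real.exp εu * (1 - pmin) < 1 := by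
    rw [lt_div_iff₀ h1p] at hElt; exact hElt
  have hd : ∀ j, 0 < 1 - Real.exp εu * (1 - pX j) := by
    intro j
    have h1 : Real.exp εu * (1 - pX j) ≤ Real.exp εu * (1 - pmin) :=
      mul_le_mul_of_nonneg_left (by linarith [hpmin_le j]) (Real.exp_pos εu).le
    linarith
  have hdle : ∀ j, 1 - Real.exp εu * (1 - pX j) ≤ Real.exp εu * pX j := by
    intro j; nlinarith [hle1 j, hfull j]
  -- entries in [0,1]
  have hK01 : ∀ i j, 0 ≤ K i j ∧ K i j ≤ 1 := by
    intro i j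
    by_cases hij : i = j
    · constructor
      · simp only [K, if_pos hij]; linarith [hd j]
      · simp only [K, if_pos hij]
        nlinarith [hle1 j, Real.exp_pos εu]
    · constructor
      · simp only [K, if_neg hij]
        exact mul_nonneg (Real.exp_pos εu).le (hfull j).le
      · simp only [K, if_neg hij]
        have hpair : pX i + pX j ≤ 1 := by
          have hsub : ({i, j} : Finset (Fin n)) ⊆ Finset.univ := Finset.subset_univ _
          have := Finset.sum_le_sum_of_subset_of_nonneg hsub
            (fun k _ _ => (hfull k).le)
          rw [Finset.sum_pair hij, hsum] at this
          exact this
        have : pX j ≤ 1 - pmin := by linarith [hpmin_le i]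
        nlinarith [Real.exp_pos εu]
  -- row sums
  have hrow : ∀ i, ∑ j, K i j = 1 := by
    intro i
    have h1 : ∀ j, K i j = Real.exp εu * pX j + (if i = j then 1 - Real.exp εu else 0) := by
      intro j
      simp only [K]
      by_cases hij : i = j <;> simp [hij] <;> ring
    calc ∑ j, K i j
        = ∑ j, (Real.exp εu * pX j + (if i = j then 1 - Real.exp εu else 0)) :=
          Finset.sum_congr rfl (fun j _ => h1 j)
      _ = Real.exp εu * (∑ j, pX j) + ∑ j, (if i = j then 1 - Real.exp εu else 0) := by
          rw [Finset.sum_add_distrib, Finset.mul_sum]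
      _ = 1 := by rw [hsum, Finset.sum_ite_eq]; simp
  -- pY = pX
  have hpY : ∀ j, pY j = pX j := by
    intro j
    have h1 : ∀ i, K i j * pX i
        = Real.exp εu * pX j * pX i + (if i = j then (1 - Real.exp εu) * pX i else 0) := by
      intro i
      simp only [K]
      by_cases hij : i = j <;> simp [hij] <;> ring
    calc pY j = ∑ i, (Real.exp εu * pX j * pX i
          + (if i = j then (1 - Real.exp εu) * pX i else 0)) :=
          Finset.sum_congr rfl (fun i _ => h1 i)
      _ = Real.exp εu * pX j * (∑ i, pX i)
          + ∑ i, (if i = j then (1 - Real.exp εu) * pX i else 0) := by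
          rw [Finset.sum_add_distrib, Finset.mul_sum]
      _ = Real.exp εu * pX j + (1 - Real.exp εu) * pX j := by
          rw [hsum, Finset.sum_ite_eq']; simp
      _ = pX j := by ring
  -- sup over i of pX j / K i j
  have hsup : ∀ j, (⨆ i, pY j / K i j) = pX j / (1 - Real.exp εu * (1 - pX j)) := by
    intro j
    have hb : BddAbove (Set.range fun i => pY j / K i j) :=
      (Set.finite_range _).bddAbove
    apply le_antisymm
    · apply ciSup_le
      intro i
      rw [hpY j]
      by_cases hij : i = j
      · subst hij; simp only [K, if_pos rfl]; exact le_rfl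
      · simp only [K, if_neg hij]
        apply div_le_div_of_nonneg_left (hfull j).le (hd j)
        exact hdle j
    · have := le_ciSup hb j
      simpa only [hpY j, K, if_pos rfl] using this
  have hΛ : ∀ j, Λ j = Real.log (pX j / (1 - Real.exp εu * (1 - pX j))) := by
    intro j
    simp only [Λ, hsup j]
  refine ⟨hK01, hrow, hpY, hΛ, ?_⟩
  -- final sup
  have hmono : ∀ j, pX j / (1 - Real.exp εu * (1 - pX j))
      ≤ pmin / (1 - Real.exp εu * (1 - pmin)) := by
    intro j
    have hdp : 0 < 1 - Real.exp εu * (1 - pmin) := by linarith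
    rw [div_le_div_iff₀ (hd j) hdp]
    nlinarith [hpmin_le j]
  have hΛle : ∀ j, Λ j ≤ Λ j0 := by
    intro j
    rw [hΛ j, hΛ j0, ← hpmin]
    apply Real.log_le_log (div_pos (hfull j) (hd j)) (hmono j)
  have hbΛ : BddAbove (Set.range Λ) := (Set.finite_range Λ).bddAbove
  have : (⨆ j, Λ j) = Λ j0 :=
    le_antisymm (ciSup_le hΛle) (le_ciSup hbΛ j0)
  rw [this, hΛ j0, ← hpmin]
end

section
/- LDP implies PMC bound: let X, Y be finite random variables, P_X full-support with p_min = min_x P_X(x). If the channel P_{Y|X} satisfies ε-LDP, i.e. P_{Y|X=x}(y) ≤ e^ε P_{Y|X=x'}(y) for all x, x', y, then for every y with P_Y(y) > 0, Λ(X→y) ≤ log(e^ε − p_min(e^ε − 1)). -/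
open scoped BigOperators

/-- Proposition 3 (LDP implies a PMC bound): if the channel `K = P_{Y|X}`
satisfies `ε`-LDP, i.e. `K x y ≤ e^ε K x' y` for all `x, x', y`, then for every
`y` with `P_Y(y) > 0`, the pointwise maximal cost
`Λ(X→y) = log max_x P_Y(y)/P_{Y|X=x}(y)` satisfies
`Λ(X→y) ≤ log(e^ε − p_min(e^ε − 1))`, where `p_min = min_x P_X(x)`. -/
theorem ldp_implies_pmc_bound
    {X Y : Type} [Fintype X] [Nonempty X] [Fintype Y]
    (pX : X → ℝ) (hsum : ∑ x, pX x = 1) (hfull : ∀ x, 0 < pX x)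
    (K : X → Y → ℝ) (hK0 : ∀ x y, 0 ≤ K x y) (hKrow : ∀ x, ∑ y, K x y = 1)
    (ε : ℝ) (hε : 0 ≤ ε)
    (hLDP : ∀ x x' y, K x y ≤ Real.exp ε * K x' y)
    (y : Y) (hy : 0 < ∑ x, K x y * pX x) :
    Real.log (⨆ x, (∑ x', K x' y * pX x') / K x y)
      ≤ Real.log (Real.exp ε - (⨅ x, pX x) * (Real.exp ε - 1)) := by
  classical
  have hexp1 : (1:ℝ) ≤ Real.exp ε := Real.one_le_exp hε
  -- every K x y is positive
  have hKpos : ∀ x, 0 < K x y := by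
    intro x
    rcases lt_or_eq_of_le (hK0 x y) with h | h
    · exact h
    · exfalso
      have hall : ∀ x', K x' y = 0 := by
        intro x'
        have := hLDP x' x y
        rw [← h] at this
        simp at this
        exact le_antisymm this (hK0 x' y)
      have : ∑ x', K x' y * pX x' = 0 := by
        apply Finset.sum_eq_zero
        intro x' _
        rw [hall x', zero_mul]
      linarith
  -- inf bounds
  have hinf_le : ∀ x, (⨅ x, pX x) ≤ pX x := fun x =>
    ciInf_le (Set.Finite.bddBelow (Set.finite_range pX)) x
  -- individual ratio bound
  have hratio : ∀ x, (∑ x', K x' y * pX x') / K x y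
      ≤ Real.exp ε - (⨅ x, pX x) * (Real.exp ε - 1) := by
    intro x
    rw [div_le_iff₀ (hKpos x)]
    have hsplit : ∑ x', K x' y * pX x'
        = K x y * pX x + ∑ x' ∈ Finset.univ.erase x, K x' y * pX x' := by
      exact (Finset.add_sum_erase _ _ (Finset.mem_univ x)).symm
    have hbound : ∑ x' ∈ Finset.univ.erase x, K x' y * pX x'
        ≤ ∑ x' ∈ Finset.univ.erase x, Real.exp ε * K x y * pX x' := by
      apply Finset.sum_le_sum
      intro x' _
      exact mul_le_mul_of_nonneg_right (hLDP x' x y) (hfull x').le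
    have hsum_erase : ∑ x' ∈ Finset.univ.erase x, pX x' = 1 - pX x := by
      have := Finset.add_sum_erase Finset.univ pX (Finset.mem_univ x)
      rw [hsum] at this
      linarith
    rw [← Finset.mul_sum, hsum_erase] at hbound
    have key : ∑ x', K x' y * pX x'
        ≤ K x y * (Real.exp ε - pX x * (Real.exp ε - 1)) := by
      rw [hsplit]; nlinarith [hKpos x]
    calc ∑ x', K x' y * pX x'
        ≤ K x y * (Real.exp ε - pX x * (Real.exp ε - 1)) := key
      _ ≤ (Real.exp ε - (⨅ x, pX x) * (Real.exp ε - 1)) * K x y := by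
          rw [mul_comm]
          apply mul_le_mul_of_nonneg_right _ (hKpos x).le
          nlinarith [hinf_le x]
  -- sup bound and positivity
  obtain ⟨x0⟩ := ‹Nonempty X›
  have hsup_pos : 0 < ⨆ x, (∑ x', K x' y * pX x') / K x y := by
    have h1 : 0 < (∑ x', K x' y * pX x') / K x0 y := div_pos hy (hKpos x0)
    exact lt_of_lt_of_le h1 (le_ciSup (f := fun x => (∑ x', K x' y * pX x') / K x y)
      (Set.Finite.bddAbove (Set.finite_range _)) x0)
  have hsup : (⨆ x, (∑ x', K x' y * pX x') / K x y)
      ≤ Real.exp ε - (⨅ x, pX x) * (Real.exp ε - 1) := ciSup_le hratio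
  exact Real.log_le_log hsup_pos hsup
end

section
/- PML implies PMC in the high-privacy regime: let X, Y be finite random variables with full-support prior P_X and p_min = min_x P_X(x). Let 0 ≤ ε_u < log(1/(1−p_min)). If P_{X|Y=y}(x) ≤ e^{ε_u} P_X(x) for all x and all y with P_Y(y) > 0 (i.e., the mechanism satisfies ε_u-PML), then for all such y, log max_x P_X(x)/P_{X|Y=y}(x) ≤ log[ p_min / (1 − e^{ε_u}(1 − p_min)) ]. -/
open scoped BigOperators

/-- Theorem 5, part 1 (PML implies PMC in the high-privacy regime): let
`p_min = min_x P_X(x)` and `0 ≤ ε_u < log(1/(1 − p_min))`. If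
`P_{X|Y=y}(x) ≤ e^{ε_u} P_X(x)` for all `x` and all `y` with `P_Y(y) > 0`
(`ε_u`-PML), then for all such `y`,
`log max_x P_X(x)/P_{X|Y=y}(x) ≤ log[p_min / (1 − e^{ε_u}(1 − p_min))]`. -/
theorem pml_implies_pmc
    {X Y : Type} [Fintype X] [Nonempty X] [Fintype Y]
    (pXY : X → Y → ℝ) (hpos : ∀ x y, 0 ≤ pXY x y)
    (hsum : ∑ x, ∑ y, pXY x y = 1)
    (hfull : ∀ x, 0 < ∑ y', pXY x y')
    (εu : ℝ) (hεu0 : 0 ≤ εu)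
    (hεu : εu < Real.log (1 / (1 - ⨅ x, ∑ y', pXY x y')))
    (hPML : ∀ y, 0 < ∑ x, pXY x y → ∀ x,
      pXY x y / (∑ x', pXY x' y) ≤ Real.exp εu * (∑ y', pXY x y'))
    (y : Y) (hy : 0 < ∑ x, pXY x y) :
    Real.log (⨆ x, (∑ y', pXY x y') / (pXY x y / ∑ x', pXY x' y))
      ≤ Real.log ((⨅ x, ∑ y', pXY x y') /
          (1 - Real.exp εu * (1 - ⨅ x, ∑ y', pXY x y'))) := by
  classical
  set P : X → ℝ := fun x => ∑ y', pXY x y' with hPdef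
  set S : ℝ := ∑ x', pXY x' y with hSdef
  set Q : X → ℝ := fun x => pXY x y / S with hQdef
  have hSpos : 0 < S := hy
  -- minimum of P
  obtain ⟨x0, hx0⟩ := Finite.exists_min P
  have hpmin : (⨅ x, P x) = P x0 :=
    le_antisymm (ciInf_le (Finite.bddBelow_range P) x0) (le_ciInf hx0)
  set p : ℝ := P x0 with hpdef
  rw [hpmin] at hεu
  have hppos : 0 < p := hfull x0
  have hPsum : ∑ x, P x = 1 := hsum
  have hPle1 : ∀ x, P x ≤ 1 := by
    intro x
    calc P x ≤ ∑ x', P x' :=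
      Finset.single_le_sum (fun x' _ => (hfull x').le) (Finset.mem_univ x)
    _ = 1 := hPsum
  have hple : ∀ x, p ≤ P x := hx0
  have hQsum : ∑ x, Q x = 1 := by
    simp only [hQdef, ← Finset.sum_div]
    rw [← hSdef, div_self hSpos.ne']
  -- p < 1
  have hplt1 : p < 1 := by
    rcases lt_or_eq_of_le (hPle1 x0) with h | h
    · exact h
    · exfalso
      have hp1 : p = 1 := h
      rw [hp1] at hεu
      simp at hεu
      linarith
  -- exp εu * (1 - p) < 1
  have hE : Real.exp εu * (1 - p) < 1 := by
    have h1 : (0:ℝ) < 1 - p := by linarith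
    have h2 : Real.exp εu < 1 / (1 - p) := by
      have := Real.exp_lt_exp.mpr hεu
      rwa [Real.exp_log (by positivity)] at this
    calc Real.exp εu * (1 - p) < (1 / (1 - p)) * (1 - p) := by
          exact mul_lt_mul_of_pos_right h2 h1
      _ = 1 := by field_simp
  set e : ℝ := Real.exp εu with hedef
  have he1 : 1 ≤ e := Real.one_le_exp hεu0
  have hD0 : 0 < 1 - e * (1 - p) := by linarith
  -- key lower bound on Q x
  have hQlb : ∀ x, 1 - e * (1 - P x) ≤ Q x := by
    intro x
    have hsplit : ∑ x' ∈ Finset.univ.erase x, Q x' + Q x = ∑ x', Q x' :=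
      Finset.sum_erase_add _ _ (Finset.mem_univ x)
    have hPerase : ∑ x' ∈ Finset.univ.erase x, P x' = 1 - P x := by
      rw [Finset.sum_erase_eq_sub (Finset.mem_univ x), hPsum]
    have hle : ∑ x' ∈ Finset.univ.erase x, Q x'
        ≤ ∑ x' ∈ Finset.univ.erase x, e * P x' :=
      Finset.sum_le_sum (fun x' _ => hPML y hy x')
    rw [← Finset.mul_sum, hPerase] at hle
    linarith [hQsum ▸ hsplit]
  have hQpos : ∀ x, 0 < Q x := by
    intro x
    have : 1 - e * (1 - p) ≤ 1 - e * (1 - P x) := by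
      have := hple x
      nlinarith
    linarith [hQlb x]
  -- pointwise ratio bound
  have hratio : ∀ x, P x / Q x ≤ p / (1 - e * (1 - p)) := by
    intro x
    have hDx : 0 < 1 - e * (1 - P x) := by
      have := hple x; nlinarith
    have h1 : P x / Q x ≤ P x / (1 - e * (1 - P x)) :=
      div_le_div_of_nonneg_left (hfull x).le hDx (hQlb x)
    have h2 : P x / (1 - e * (1 - P x)) ≤ p / (1 - e * (1 - p)) := by
      rw [div_le_div_iff₀ hDx hD0]
      nlinarith [hple x, mul_nonneg (sub_nonneg.mpr (hple x)) (sub_nonneg.mpr he1)]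
    linarith
  -- assemble
  have hbdd : BddAbove (Set.range fun x => P x / Q x) := Finite.bddAbove_range _
  have hsup_le : (⨆ x, P x / Q x) ≤ p / (1 - e * (1 - p)) := ciSup_le hratio
  have hsup_pos : 0 < ⨆ x, P x / Q x := by
    have : 0 < P x0 / Q x0 := div_pos hppos (hQpos x0)
    exact lt_of_lt_of_le this (le_ciSup hbdd x0)
  rw [hpmin]
  exact Real.log_le_log hsup_pos hsup_le
end

section
/- PMC implies PML: let X, Y be finite random variables with full-support prior P_X and p_min = min_x P_X(x). Let ε_l ≥ 0. If P_{X|Y=y}(x) ≥ e^{−ε_l} P_X(x) for all x and all y with P_Y(y) > 0 (i.e., the mechanism satisfies ε_l-PMC), then for all such y, log max_x P_{X|Y=y}(x)/P_X(x) ≤ log[ (1 − e^{−ε_l}(1 − p_min)) / p_min ]. -/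
open scoped BigOperators

/-- Theorem 5, part 2 (PMC implies PML): let `p_min = min_x P_X(x)` and
`ε_l ≥ 0`. If `P_{X|Y=y}(x) ≥ e^{−ε_l} P_X(x)` for all `x` and all `y` with
`P_Y(y) > 0` (`ε_l`-PMC), then for all such `y`,
`log max_x P_{X|Y=y}(x)/P_X(x) ≤ log[(1 − e^{−ε_l}(1 − p_min)) / p_min]`. -/
theorem pmc_implies_pml
    {X Y : Type} [Fintype X] [Nonempty X] [Fintype Y]
    (pXY : X → Y → ℝ) (hpos : ∀ x y, 0 ≤ pXY x y)
    (hsum : ∑ x, ∑ y, pXY x y = 1)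
    (hfull : ∀ x, 0 < ∑ y', pXY x y')
    (εl : ℝ) (hεl : 0 ≤ εl)
    (hPMC : ∀ y, 0 < ∑ x, pXY x y → ∀ x,
      Real.exp (-εl) * (∑ y', pXY x y') ≤ pXY x y / (∑ x', pXY x' y))
    (y : Y) (hy : 0 < ∑ x, pXY x y) :
    Real.log (⨆ x, (pXY x y / ∑ x', pXY x' y) / (∑ y', pXY x y'))
      ≤ Real.log ((1 - Real.exp (-εl) * (1 - ⨅ x, ∑ y', pXY x y')) /
          (⨅ x, ∑ y', pXY x y')) := by
  classical
  set p : X → ℝ := fun x => ∑ y', pXY x y' with hp_def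
  set s : ℝ := ∑ x', pXY x' y with hs_def
  set q : X → ℝ := fun x => pXY x y / s with hq_def
  set a : ℝ := Real.exp (-εl) with ha_def
  have ha0 : 0 < a := Real.exp_pos _
  have ha1 : a ≤ 1 := by
    rw [ha_def]
    exact Real.exp_le_one_iff.mpr (by linarith)
  have hp : ∀ x, 0 < p x := hfull
  have hq : ∀ x, a * p x ≤ q x := hPMC y hy
  have hqpos : ∀ x, 0 < q x := fun x => lt_of_lt_of_le (mul_pos ha0 (hfull x)) (hq x)
  have hpsum : ∑ x, p x = 1 := by
    rw [hp_def]; exact hsum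
  have hqsum : ∑ x, q x = 1 := by
    rw [hq_def]
    simp only [← Finset.sum_div]
    rw [div_self (ne_of_gt hy)]
  -- p_min
  obtain ⟨x0, hx0⟩ := Finite.exists_min p
  have hbdd : BddBelow (Set.range p) := Set.Finite.bddBelow (Set.finite_range p)
  have hpmin : (⨅ x, p x) = p x0 := le_antisymm (ciInf_le hbdd x0) (le_ciInf hx0)
  have hm0 : 0 < (⨅ x, p x) := hpmin ▸ hp x0
  -- key bound for each x
  have key : ∀ x, q x / p x ≤ (1 - a * (1 - ⨅ x, p x)) / (⨅ x, p x) := by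
    intro x
    have h1 : q x + a * (1 - p x) ≤ 1 := by
      have hsplit : ∑ x', q x' = q x + ∑ x' ∈ Finset.univ.erase x, q x' := by
        rw [Finset.add_sum_erase _ _ (Finset.mem_univ x)]
      have hps : ∑ x' ∈ Finset.univ.erase x, p x' = 1 - p x := by
        have := Finset.add_sum_erase Finset.univ p (Finset.mem_univ x)
        linarith [hpsum ▸ this]
      have h2 : a * (1 - p x) ≤ ∑ x' ∈ Finset.univ.erase x, q x' := by
        rw [← hps, Finset.mul_sum]
        exact Finset.sum_le_sum fun i _ => hq i
      calc q x + a * (1 - p x) ≤ q x + ∑ x' ∈ Finset.univ.erase x, q x' := by linarith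
        _ = ∑ x', q x' := hsplit.symm
        _ = 1 := hqsum
    have h3 : q x / p x ≤ (1 - a * (1 - p x)) / p x := by
      apply div_le_div_of_nonneg_right (by linarith) (hp x).le
    refine h3.trans ?_
    rw [div_le_div_iff₀ (hp x) hm0]
    have hmx : (⨅ x, p x) ≤ p x := hpmin ▸ hx0 x
    nlinarith [hm0, hp x]
  -- conclude
  have hbdda : BddAbove (Set.range fun x => q x / p x) :=
    Set.Finite.bddAbove (Set.finite_range _)
  have hsup_le : (⨆ x, q x / p x) ≤ (1 - a * (1 - ⨅ x, p x)) / (⨅ x, p x) :=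
    ciSup_le key
  have hsup_pos : 0 < ⨆ x, q x / p x := by
    have : 0 < q x0 / p x0 := div_pos (hqpos x0) (hp x0)
    exact lt_of_lt_of_le this (le_ciSup hbdda x0)
  exact Real.log_le_log hsup_pos hsup_le
end

section
/- Binary uniform equivalence: let 𝒳 = {0,1} with P_X(0) = P_X(1) = 1/2, and let 0 ≤ ε_u < log 2. Set ε_l* = log[ (1/2) / (1 − e^{ε_u}/2) ]. Then a channel P_{Y|X} with finite output alphabet satisfies ε_u-PML (i.e., P_{X|Y=y}(x) ≤ e^{ε_u} P_X(x) for all x, y with P_Y(y) > 0) if and only if it satisfies ε_l*-PMC (i.e., P_{X|Y=y}(x) ≥ e^{−ε_l*} P_X(x) for all such x, y). -/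
open scoped BigOperators

/-- Corollary 3 (binary uniform equivalence): let `𝒳 = {0,1}` with
`P_X(0) = P_X(1) = 1/2` and `0 ≤ ε_u < log 2`, and set
`ε_l* = log[(1/2)/(1 − e^{ε_u}/2)]`. A channel `K` with finite output alphabet
satisfies `ε_u`-PML (posterior `≤ e^{ε_u} ·` prior for every supported `y`)
if and only if it satisfies `ε_l*`-PMC (posterior `≥ e^{−ε_l*} ·` prior). -/
theorem binary_uniform_pml_iff_pmc
    {Y : Type} [Fintype Y]
    (K : Fin 2 → Y → ℝ) (hK0 : ∀ x y, 0 ≤ K x y) (hKrow : ∀ x, ∑ y, K x y = 1)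
    (εu : ℝ) (hεu0 : 0 ≤ εu) (hεu : εu < Real.log 2) :
    let pY : Y → ℝ := fun y => ∑ x, K x y * (1 / 2)
    let post : Fin 2 → Y → ℝ := fun x y => K x y * (1 / 2) / pY y
    let εl : ℝ := Real.log ((1 / 2) / (1 - Real.exp εu / 2))
    ((∀ x y, 0 < pY y → post x y ≤ Real.exp εu * (1 / 2))
      ↔ (∀ x y, 0 < pY y → Real.exp (-εl) * (1 / 2) ≤ post x y)) := by
  intro pY post εl
  have h2 : Real.exp εu < 2 := by
    calc Real.exp εu < Real.exp (Real.log 2) := Real.exp_lt_exp.mpr hεu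
    _ = 2 := Real.exp_log two_pos
  have hA : 0 < 1 - Real.exp εu / 2 := by linarith
  have hεl : Real.exp (-εl) = 2 * (1 - Real.exp εu / 2) := by
    have hpos : (0:ℝ) < (1 / 2) / (1 - Real.exp εu / 2) := by positivity
    have : Real.exp εl = (1 / 2) / (1 - Real.exp εu / 2) := Real.exp_log hpos
    rw [Real.exp_neg, this]
    field_simp
  have hsum : ∀ y, 0 < pY y → post 0 y + post 1 y = 1 := by
    intro y hy
    have hpy : pY y = K 0 y * (1 / 2) + K 1 y * (1 / 2) := by
      simp [pY, Fin.sum_univ_two]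
    simp only [post]
    rw [← add_div, ← hpy, div_self (ne_of_gt hy)]
  constructor
  · intro h x y hy
    have hs := hsum y hy
    fin_cases x
    · show Real.exp (-εl) * (1 / 2) ≤ post 0 y
      have := h 1 y hy
      rw [hεl]
      nlinarith
    · show Real.exp (-εl) * (1 / 2) ≤ post 1 y
      have := h 0 y hy
      rw [hεl]
      nlinarith
  · intro h x y hy
    have hs := hsum y hy
    fin_cases x
    · show post 0 y ≤ Real.exp εu * (1 / 2)
      have := h 1 y hy
      rw [hεl] at this
      nlinarith
    · show post 1 y ≤ Real.exp εu * (1 / 2)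
      have := h 0 y hy
      rw [hεl] at this
      nlinarith
end

section
/- LDP implies PML bound: let X, Y be finite random variables with full-support prior P_X, p_min = min_x P_X(x). If P_{Y|X=x}(y) ≤ e^ε P_{Y|X=x'}(y) for all x, x', y (ε-LDP), then for all (x,y) with P_Y(y) > 0, P_{X|Y=y}(x)/P_X(x) ≤ 1/(p_min + e^{−ε}(1 − p_min)), i.e., the mechanism satisfies ε₂-PML with ε₂ = −log(p_min + e^{−ε}(1 − p_min)). -/
open scoped BigOperators

/-- Proposition 1 (LDP implies a PML bound): if the channel `K = P_{Y|X}`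
satisfies `ε`-LDP, i.e. `K x y ≤ e^ε K x' y` for all `x, x', y`, then for all
`(x,y)` with `P_Y(y) > 0`,
`P_{X|Y=y}(x)/P_X(x) = K x y / P_Y(y) ≤ 1/(p_min + e^{−ε}(1 − p_min))`,
i.e. the mechanism satisfies `ε₂`-PML with
`ε₂ = −log(p_min + e^{−ε}(1 − p_min))`, where `p_min = min_x P_X(x)`. -/
theorem ldp_implies_pml_bound
    {X Y : Type} [Fintype X] [Nonempty X] [Fintype Y]
    (pX : X → ℝ) (hsum : ∑ x, pX x = 1) (hfull : ∀ x, 0 < pX x)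
    (K : X → Y → ℝ) (hK0 : ∀ x y, 0 ≤ K x y) (hKrow : ∀ x, ∑ y, K x y = 1)
    (ε : ℝ) (hε : 0 ≤ ε)
    (hLDP : ∀ x x' y, K x y ≤ Real.exp ε * K x' y) :
    ∀ x y, 0 < ∑ x', K x' y * pX x' →
      K x y / (∑ x', K x' y * pX x')
        ≤ 1 / ((⨅ x'', pX x'') + Real.exp (-ε) * (1 - ⨅ x'', pX x'')) := by
  classical
  intro x y hPy
  set pm := ⨅ x'', pX x'' with hpm
  have hbdd : BddBelow (Set.range pX) := (Set.finite_range pX).bddBelow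
  have hle : ∀ x', pm ≤ pX x' := fun x' => ciInf_le hbdd x'
  have hpm_pos : 0 < pm := by
    obtain ⟨x0, hx0⟩ := Finite.exists_min pX
    have : pX x0 ≤ pm := le_ciInf hx0
    exact lt_of_lt_of_le (hfull x0) this
  have hpm_le1 : pm ≤ 1 := by
    inhabit X
    have h1 : pX default ≤ 1 := by
      have := Finset.single_le_sum (f := pX) (fun i _ => (hfull i).le)
        (Finset.mem_univ default)
      linarith [hsum ▸ this]
    exact (hle default).trans h1
  have hexp : 0 < Real.exp (-ε) := Real.exp_pos _
  have hexp1 : Real.exp (-ε) ≤ 1 := by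
    rw [Real.exp_le_one_iff]; linarith
  have hD : 0 < pm + Real.exp (-ε) * (1 - pm) := by nlinarith
  -- pointwise bound: e^{-ε} K x y ≤ K x' y
  have hpt : ∀ x', Real.exp (-ε) * K x y ≤ K x' y := by
    intro x'
    have h := hLDP x x' y
    have := mul_le_mul_of_nonneg_left h hexp.le
    rwa [← mul_assoc, ← Real.exp_add, neg_add_cancel, Real.exp_zero, one_mul] at this
  -- key lower bound on P_Y
  have hkey : K x y * (pX x + Real.exp (-ε) * (1 - pX x)) ≤ ∑ x', K x' y * pX x' := by
    have hsplit : ∑ x', K x' y * pX x'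
        = K x y * pX x + ∑ x' ∈ Finset.univ.erase x, K x' y * pX x' := by
      rw [← Finset.add_sum_erase _ _ (Finset.mem_univ x)]
    have hrest : ∑ x' ∈ Finset.univ.erase x, Real.exp (-ε) * K x y * pX x'
        ≤ ∑ x' ∈ Finset.univ.erase x, K x' y * pX x' := by
      apply Finset.sum_le_sum
      intro i _
      exact mul_le_mul_of_nonneg_right (hpt i) (hfull i).le
    have hsum' : ∑ x' ∈ Finset.univ.erase x, pX x' = 1 - pX x := by
      have := Finset.add_sum_erase Finset.univ pX (Finset.mem_univ x)
      linarith [hsum ▸ this]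
    have : ∑ x' ∈ Finset.univ.erase x, Real.exp (-ε) * K x y * pX x'
        = Real.exp (-ε) * K x y * (1 - pX x) := by
      rw [← Finset.mul_sum, hsum']
    rw [hsplit]
    nlinarith [hrest, this]
  -- compare with pm version
  have hmono : K x y * (pm + Real.exp (-ε) * (1 - pm))
      ≤ K x y * (pX x + Real.exp (-ε) * (1 - pX x)) := by
    apply mul_le_mul_of_nonneg_left _ (hK0 x y)
    nlinarith [hle x]
  rw [div_le_div_iff₀ hPy hD]
  nlinarith [hmono, hkey]
end
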